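/- arXiv:2605.02532 — 6 statements merged into one kernel-verified Lean document; each statement's English description precedes it below -/
import Mathlib

section
/- Let Σ be a connected bidirected graph on {1,…,d} with edge set E and incidence matrix A. Choose F ⊆ E as follows, setting t := #E − #F: either (Case 1) Σ has no halfedges and every circle is positive, and F consists of d−1 ordinary edges whose columns are linearly independent (a spanning signed tree); or (Case 2) Σ has a halfedge, #F = d, exactly one element of F is a halfedge, and the ordinary edges of F form a spanning tree of {1,…,d}; or (Case 3) Σ has no halfedges but has a negative circle, #F = d, F contains no halfedges, the underlying graph of F is connected and spanning, and the unique circle contained in F is negative, with edge set N ⊆ F. Let ε_1, …, ε_t be the edges of E ∖ F; for each i let C_i ⊆ F ∪ {ε_i} be the unique minimal subset whose columns are ℝ-linearly dependent (it contains ε_i), and let a_i ∈ ℤ^E be the primitive vector with A·a_i = 0, support exactly C_i, and a_i(ε_i) > 0. Define φ : ℤ^E → ℤ^t (in Cases 1 and 2) or φ : ℤ^E → ℤ^t ⊕ ℤ/2ℤ (in Case 3) by φ(x) = (⟨a_1, x⟩, …, ⟨a_t, x⟩), with the additional component Σ_{e∈N} x(e) mod 2 in Case 3. Then φ is surjective and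 its kernel is exactly A^T ℤ^d; that is, 0 → A^T ℤ^d → ℤ^E → (codomain) → 0 is exact. (This realizes the weights of the toric ring R_P of the signed poset with Hasse diagram Σ.) -/
open Matrix

/-- A column of an incidence matrix corresponding to a halfedge at some vertex. -/
def IsHalfedgeCol {d : ℕ} (c : Fin d → ℤ) : Prop :=
  ∃ (i : Fin d) (s : ℤ), (s = 1 ∨ s = -1) ∧ c = s • Pi.single i (1 : ℤ)

/-- A column of an incidence matrix corresponding to an ordinary edge joining two
distinct vertices. -/
def IsEdgeCol {d : ℕ} (c : Fin d → ℤ) : Prop :=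
  ∃ (i j : Fin d) (s s' : ℤ), i ≠ j ∧ (s = 1 ∨ s = -1) ∧ (s' = 1 ∨ s' = -1) ∧
    c = s • Pi.single i (1 : ℤ) + s' • Pi.single j (1 : ℤ)

/-- `A` is the incidence matrix of a bidirected graph: every column is a halfedge
column or an ordinary edge column. -/
def IsBidirected {d : ℕ} {E : Type*} (A : Matrix (Fin d) E ℤ) : Prop :=
  ∀ e, IsHalfedgeCol (fun v => A v e) ∨ IsEdgeCol (fun v => A v e)

/-- The bidirected graph has a halfedge. -/
def HasHalfedge {d : ℕ} {E : Type*} (A : Matrix (Fin d) E ℤ) : Prop :=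
  ∃ e, IsHalfedgeCol (fun v => A v e)

/-- Connectivity of the underlying multigraph of ordinary edges. -/
def ConnectedInc {d : ℕ} {E : Type*} (A : Matrix (Fin d) E ℤ) : Prop :=
  ∀ i j : Fin d,
    Relation.ReflTransGen (fun u v => u ≠ v ∧ ∃ e, A u e ≠ 0 ∧ A v e ≠ 0) i j

/-- `(u 0, …, u (k-1) ; f 0, …, f (k-1))` is a circle of the bidirected graph with
incidence matrix `A`: distinct vertices, distinct ordinary edges, with `f t` joining
`u t` and `u ((t+1) % k)`. -/
def IsCircle {d : ℕ} {E : Type*} (A : Matrix (Fin d) E ℤ)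
    (k : ℕ) (u : ℕ → Fin d) (f : ℕ → E) : Prop :=
  2 ≤ k ∧
  (∀ t t', t < k → t' < k → u t = u t' → t = t') ∧
  (∀ t t', t < k → t' < k → f t = f t' → t = t') ∧
  (∀ t < k, A (u t) (f t) ≠ 0 ∧ A (u ((t + 1) % k)) (f t) ≠ 0 ∧
    ∀ v, A v (f t) ≠ 0 → v = u t ∨ v = u ((t + 1) % k))

/-- The product of the signs `σ(f_t) = −A(u_t, f_t)·A(u_{t+1}, f_t)` of the edges of a
circle; the circle is positive if this is `1` and negative if it is `-1`. -/
def circleSign {d : ℕ} {E : Type*} (A : Matrix (Fin d) E ℤ)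
    (k : ℕ) (u : ℕ → Fin d) (f : ℕ → E) : ℤ :=
  ∏ t ∈ Finset.range k, (-(A (u t) (f t) * A (u ((t + 1) % k)) (f t)))

/-!
Since each `a_i` is orthogonal to `Aᵀ ℤ^d` and supported on `F ∪ {ε_i}`, a vector `x` is
pinned down modulo `Aᵀ ℤ^d` by its weights and by `x|_F`: once `a_i(ε_i) = 1`, the values at
the `ε_i` realise any weights, and `x` with zero weights lies in `Aᵀ ℤ^d` as soon as `x|_F`
lies in `(Aᵀ ℤ^d)|_F`. Everything thus reduces to describing `(Aᵀ ℤ^d)|_F`, and `a_i(ε_i) = 1`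
follows from it and primitivity.

In Cases 1 and 2, `F` minus its halfedge is circle-free (a positive circle gives a `±1`
dependency among its columns; a circle in a connected graph with `d - 1` edges could be cut
open without disconnecting it), and the edge equations of a forest are solved by peeling off
leaves, so `(Aᵀ ℤ^d)|_F = ℤ^F`. In Case 3, `F` minus an edge of its negative circle `N` is a
forest, and the `±1` combination of the columns around `N` is `2 e_{u_0}` up to sign; hence
`(Aᵀ ℤ^d)|_F` consists of the `x` with `∑_N x` even. There `a_i(ε_i) = 2` is excluded by
pairing with the (even) column sums `Aᵀ 1` modulo 4.
-/

section Columns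

variable {d : ℕ}

lemma IsHalfedgeCol.exists_support {c : Fin d → ℤ} (h : IsHalfedgeCol c) :
    ∃ w, (c w = 1 ∨ c w = -1) ∧ ∀ v, c v ≠ 0 → v = w := by
  obtain ⟨w, s, hs, rfl⟩ := h
  exact ⟨w, by simpa using hs, fun v hv => by by_contra h; simp [h] at hv⟩

lemma IsEdgeCol.exists_support {c : Fin d → ℤ} (h : IsEdgeCol c) :
    ∃ p q, p ≠ q ∧ (c p = 1 ∨ c p = -1) ∧ (c q = 1 ∨ c q = -1) ∧
      ∀ v, v ≠ p → v ≠ q → c v = 0 := by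
  obtain ⟨p, q, s, s', hpq, hs, hs', rfl⟩ := h
  exact ⟨p, q, hpq, by simpa [hpq] using hs, by simpa [hpq.symm] using hs',
    fun v hp hq => by simp [hp, hq]⟩

lemma IsEdgeCol.mul_self_eq_one {c : Fin d → ℤ} (h : IsEdgeCol c) {v : Fin d} (hv : c v ≠ 0) :
    c v * c v = 1 := by
  obtain ⟨p, q, -, hp, hq, h0⟩ := h.exists_support
  by_cases hvp : v = p
  · subst hvp; rcases hp with h | h <;> simp [h]
  by_cases hvq : v = q
  · subst hvq; rcases hq with h | h <;> simp [h]
  exact absurd (h0 v hvp hvq) hv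

lemma IsEdgeCol.exists_other {c : Fin d → ℤ} (h : IsEdgeCol c) {p : Fin d} (hp : c p ≠ 0) :
    ∃ q, q ≠ p ∧ c q ≠ 0 ∧ ∀ v, c v ≠ 0 → v = p ∨ v = q := by
  obtain ⟨i, j, hij, hi, hj, h0⟩ := h.exists_support
  have hi0 : c i ≠ 0 := by rcases hi with h | h <;> simp [h]
  have hj0 : c j ≠ 0 := by rcases hj with h | h <;> simp [h]
  have hsupp : ∀ v, c v ≠ 0 → v = i ∨ v = j := fun v hv => by
    by_contra! hne; exact hv (h0 v hne.1 hne.2)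
  rcases hsupp p hp with rfl | rfl
  · exact ⟨j, hij.symm, hj0, fun v hv => hsupp v hv⟩
  · exact ⟨i, hij, hi0, fun v hv => (hsupp v hv).symm⟩

lemma IsEdgeCol.eq_or_eq_of_ne_zero {c : Fin d → ℤ} (h : IsEdgeCol c) {p q : Fin d}
    (hpq : p ≠ q) (hp : c p ≠ 0) (hq : c q ≠ 0) : ∀ v, c v ≠ 0 → v = p ∨ v = q := by
  obtain ⟨q', -, -, hsupp⟩ := h.exists_other hp
  rcases hsupp q hq with rfl | rfl
  · exact absurd rfl hpq
  · exact hsupp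

lemma IsBidirected.isEdgeCol {E : Type*} {A : Matrix (Fin d) E ℤ} (hA : IsBidirected A)
    (hnh : ¬ HasHalfedge A) (e : E) : IsEdgeCol fun v => A v e :=
  (hA e).resolve_left fun h => hnh ⟨e, h⟩

lemma IsBidirected.mul_self_eq_one {E : Type*} {A : Matrix (Fin d) E ℤ} (hA : IsBidirected A)
    {v : Fin d} {e : E} (hv : A v e ≠ 0) : A v e * A v e = 1 := by
  rcases hA e with h | h
  · obtain ⟨w, hw, h0⟩ := h.exists_support
    obtain rfl := h0 v hv
    rcases hw with h | h <;> simp only [h] <;> norm_num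
  · exact h.mul_self_eq_one hv

lemma IsEdgeCol.two_dvd_sum {c : Fin d → ℤ} (h : IsEdgeCol c) : 2 ∣ ∑ v, c v := by
  obtain ⟨p, q, s, s', -, hs, hs', rfl⟩ := h
  simp only [Pi.add_apply, Pi.smul_apply, smul_eq_mul, Finset.sum_add_distrib]
  simp only [Pi.single_apply, mul_ite, mul_one, mul_zero, Finset.sum_ite_eq', Finset.mem_univ,
    if_true]
  rcases hs with rfl | rfl <;> rcases hs' with rfl | rfl <;> norm_num

end Columns

section MulVec

variable {m E R : Type*} [Fintype m] [NonUnitalNonAssocSemiring R]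
  {A : Matrix m E R} {e : E}

lemma mulVec_transpose_apply_eq_add {p q : m} (hpq : p ≠ q)
    (h : ∀ v, A v e ≠ 0 → v = p ∨ v = q) (y : m → R) :
    (Aᵀ *ᵥ y) e = A p e * y p + A q e * y q := by
  simp only [mulVec, dotProduct, transpose_apply]
  rw [Finset.sum_eq_add (s := Finset.univ) p q hpq (fun v _ hv => ?_) (by simp) (by simp)]
  by_contra hne
  rcases h v (left_ne_zero_of_mul hne) with rfl | rfl
  exacts [hv.1 rfl, hv.2 rfl]

lemma mulVec_transpose_apply_eq_single {w : m} (h : ∀ v, A v e ≠ 0 → v = w) (y : m → R) :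
    (Aᵀ *ᵥ y) e = A w e * y w := by
  simp only [mulVec, dotProduct, transpose_apply]
  refine Finset.sum_eq_single w (fun v _ hv => ?_) (by simp)
  by_contra hne
  exact hv (h v (left_ne_zero_of_mul hne))

end MulVec

lemma dotProduct_mulVec_eq_zero {m n R : Type*} [Fintype m] [Fintype n] [NonUnitalSemiring R]
    {B : Matrix m n R} {a : m → R} (h : a ᵥ* B = 0) (y : n → R) : a ⬝ᵥ (B *ᵥ y) = 0 := by
  rw [dotProduct_mulVec, h, zero_dotProduct]

section Parity

lemma two_mul_dvd_sum_mul_sub {ι : Type*} {s : Finset ι} {p q w : ι → ℤ} {n : ℤ}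
    (hpq : ∀ i ∈ s, 2 ∣ p i - q i) (hw : ∀ i ∈ s, n ∣ w i) :
    2 * n ∣ ∑ i ∈ s, p i * w i - ∑ i ∈ s, q i * w i := by
  rw [← Finset.sum_sub_distrib]
  exact Finset.dvd_sum fun i hi => by rw [← sub_mul]; exact mul_dvd_mul (hpq i hi) (hw i hi)

lemma two_dvd_one_sub {c : ℤ} (hc : c = 1 ∨ c = -1) : 2 ∣ 1 - c := by
  rcases hc with rfl | rfl <;> norm_num

lemma two_dvd_sum_mul_iff {ι : Type*} {s : Finset ι} {c z : ι → ℤ}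
    (hc : ∀ i ∈ s, c i = 1 ∨ c i = -1) : 2 ∣ ∑ i ∈ s, c i * z i ↔ 2 ∣ ∑ i ∈ s, z i := by
  obtain ⟨q, hq⟩ := two_mul_dvd_sum_mul_sub (n := 1) (p := fun _ => 1) (q := c) (w := z)
    (fun i hi => two_dvd_one_sub (hc i hi)) fun _ _ => one_dvd _
  simp only [one_mul] at hq
  omega

end Parity

section Circles

variable {d : ℕ} {E : Type*} {A : Matrix (Fin d) E ℤ} {k : ℕ} {u : ℕ → Fin d} {f : ℕ → E}

lemma IsCircle.succ_mod_ne (hc : IsCircle A k u f) {t : ℕ} (ht : t < k) : (t + 1) % k ≠ t := by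
  have hk := hc.1
  rcases Nat.lt_or_ge (t + 1) k with h | h
  · rw [Nat.mod_eq_of_lt h]; omega
  · rw [show t + 1 = k by omega, Nat.mod_self]; omega

lemma IsCircle.vertex_ne (hc : IsCircle A k u f) {t : ℕ} (ht : t < k) :
    u t ≠ u ((t + 1) % k) := fun h =>
  hc.succ_mod_ne ht (hc.2.1 _ _ (Nat.mod_lt _ (by omega)) ht h.symm)

lemma IsCircle.apply_edge (hc : IsCircle A k u f) {t : ℕ} (ht : t < k) (v : Fin d) :
    A v (f t) = (if v = u t then A (u t) (f t) else 0) +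
      (if v = u ((t + 1) % k) then A (u ((t + 1) % k)) (f t) else 0) := by
  have hne := hc.vertex_ne ht
  by_cases h1 : v = u t
  · subst h1; simp [hne]
  by_cases h2 : v = u ((t + 1) % k)
  · subst h2; simp [h1]
  simp only [h1, h2, if_false, add_zero]
  by_contra hv
  rcases (hc.2.2.2 t ht).2.2 v hv with h | h
  exacts [h1 h, h2 h]

/-- The coefficients are `c t = σ(f_0)⋯σ(f_{t-1}) · A(u_0,f_0) · A(u_t,f_t)`; the sum
telescopes, and only the closing vertex `u 0` keeps `(1 - sign)` of its contribution. -/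
lemma IsCircle.exists_dependency (hA : IsBidirected A) (hc : IsCircle A k u f) :
    ∃ c : ℕ → ℤ, c 0 = 1 ∧ (∀ t < k, c t = 1 ∨ c t = -1) ∧
      ∀ v, ∑ t ∈ Finset.range k, c t * A v (f t) =
        if v = u 0 then (1 - circleSign A k u f) * A (u 0) (f 0) else 0 := by
  have hk : 0 < k := by have := hc.1; omega
  set σ : ℕ → ℤ := fun t => -(A (u t) (f t) * A (u ((t + 1) % k)) (f t))
  set P : ℕ → ℤ := fun t => ∏ s ∈ Finset.range t, σ s
  have hunit : ∀ t < k, IsUnit (A (u t) (f t)) ∧ IsUnit (A (u ((t + 1) % k)) (f t)) :=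
    fun t ht => ⟨.of_mul_eq_one_right _ (hA.mul_self_eq_one (hc.2.2.2 t ht).1),
      .of_mul_eq_one_right _ (hA.mul_self_eq_one (hc.2.2.2 t ht).2.1)⟩
  have hP : ∀ t ≤ k, IsUnit (P t) := fun t ht =>
    IsUnit.prod_iff.2 fun s hs => by
      have := hunit s (by simp at hs; omega)
      exact (this.1.mul this.2).neg
  refine ⟨fun t => P t * A (u 0) (f 0) * A (u t) (f t), ?_, fun t ht => ?_, fun v => ?_⟩
  · simpa [P] using hA.mul_self_eq_one (hc.2.2.2 0 hk).1
  · exact Int.isUnit_iff.1 (((hP t ht.le).mul (hunit 0 hk).1).mul (hunit t ht).1)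
  set h : ℕ → ℤ := fun t => P t * if v = u (t % k) then 1 else 0
  have hterm : ∀ t ∈ Finset.range k,
      P t * A (u 0) (f 0) * A (u t) (f t) * A v (f t) = A (u 0) (f 0) * (h t - h (t + 1)) := by
    intro t ht
    rw [Finset.mem_range] at ht
    have hsq := hA.mul_self_eq_one (hc.2.2.2 t ht).1
    have hPs : P (t + 1) = P t * σ t := Finset.prod_range_succ _ _
    simp only [h, hPs, Nat.mod_eq_of_lt ht, hc.apply_edge ht v, σ]
    split_ifs <;> first | ring1 | linear_combination (P t * A (u 0) (f 0)) * hsq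
  rw [Finset.sum_congr rfl hterm, ← Finset.mul_sum, Finset.sum_range_sub']
  simp only [h, P, Nat.zero_mod, Nat.mod_self, Finset.range_zero, Finset.prod_empty]
  split_ifs with hv <;> simp [hv, circleSign, σ, mul_comm]

lemma sum_mul_mulVec_transpose_eq {m : Type*} [Fintype m] [DecidableEq m] {B : Matrix m E ℤ}
    {c : ℕ → ℤ} {w : m} {z : ℤ}
    (h : ∀ v, ∑ t ∈ Finset.range k, c t * B v (f t) = if v = w then z else 0) (y : m → ℤ) :
    ∑ t ∈ Finset.range k, c t * (Bᵀ *ᵥ y) (f t) = z * y w := by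
  simp only [mulVec, dotProduct, transpose_apply, Finset.mul_sum]
  rw [Finset.sum_comm]
  simp_rw [← mul_assoc, ← Finset.sum_mul, h]
  simp

end Circles

def SolvableOn {m E : Type*} [Fintype m] (A : Matrix m E ℤ) (F : Finset E) (x : E → ℤ) : Prop :=
  ∃ y : m → ℤ, ∀ e ∈ F, (Aᵀ *ᵥ y) e = x e

section Forests

variable {d : ℕ} {E : Type*} (A : Matrix (Fin d) E ℤ)

def IsLeaf (G : Finset E) (ℓ : Fin d) (e₀ : E) : Prop :=
  e₀ ∈ G ∧ A ℓ e₀ ≠ 0 ∧ ∀ e ∈ G, A ℓ e ≠ 0 → e = e₀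

def IsCircleFree (G : Finset E) : Prop :=
  ∀ k u f, IsCircle A k u f → (∀ s < k, f s ∈ G) → False

def IsPathIn (G : Finset E) (m : ℕ) (u : ℕ → Fin d) (f : ℕ → E) : Prop :=
  (∀ s ≤ m, ∀ t ≤ m, u s = u t → s = t) ∧
    ∀ t < m, f t ∈ G ∧ A (u t) (f t) ≠ 0 ∧ A (u (t + 1)) (f t) ≠ 0

variable {A} {G : Finset E} {m : ℕ} {u : ℕ → Fin d} {f : ℕ → E}

lemma IsCircleFree.mono {G' : Finset E} (h : IsCircleFree A G) (hG' : G' ⊆ G) :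
    IsCircleFree A G' :=
  fun k u f hc hf => h k u f hc fun s hs => hG' (hf s hs)

lemma IsPathIn.succ_le (hp : IsPathIn A G m u f) : m + 1 ≤ d := by
  simpa using Fintype.card_le_of_injective (fun s : Fin (m + 1) => u s)
    fun s t h => Fin.ext (hp.1 s (by omega) t (by omega) h)

lemma IsPathIn.vertex_ne (hp : IsPathIn A G m u f) {t : ℕ} (ht : t < m) : u t ≠ u (t + 1) :=
  fun h => by have := hp.1 t (by omega) (t + 1) (by omega) h; omega

lemma IsPathIn.edge_injOn (hord : ∀ e ∈ G, IsEdgeCol fun v => A v e) (hp : IsPathIn A G m u f)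
    {s t : ℕ} (hs : s < m) (ht : t < m) (h : f s = f t) : s = t := by
  obtain ⟨hf, h1, h2⟩ := hp.2 t ht
  have hsupp := (hord _ hf).eq_or_eq_of_ne_zero (hp.vertex_ne ht) h1 h2
  obtain ⟨-, h3, h4⟩ := hp.2 s hs
  rw [h] at h3 h4
  have e1 : s = t ∨ s = t + 1 := (hsupp _ h3).imp
    (hp.1 _ (by omega) _ (by omega)) (hp.1 _ (by omega) _ (by omega))
  have e2 : s + 1 = t ∨ s + 1 = t + 1 := (hsupp _ h4).imp
    (hp.1 _ (by omega) _ (by omega)) (hp.1 _ (by omega) _ (by omega))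
  omega

lemma IsPathIn.snoc (hp : IsPathIn A G m u f) {w : Fin d} {e : E} (hw : ∀ s ≤ m, u s ≠ w)
    (he : e ∈ G) (hm : A (u m) e ≠ 0) (hwe : A w e ≠ 0) :
    IsPathIn A G (m + 1) (Function.update u (m + 1) w) (Function.update f m e) := by
  refine ⟨fun s hs t ht h => ?_, fun t ht => ?_⟩
  · simp only [Function.update_apply] at h
    split_ifs at h with h1 h2 h2
    · omega
    · exact absurd h.symm (hw t (by omega))
    · exact absurd h (hw s (by omega))
    · exact hp.1 s (by omega) t (by omega) h
  · rcases Nat.lt_or_ge t m with ht' | ht'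
    · rw [Function.update_of_ne (by omega : t ≠ m + 1),
        Function.update_of_ne (by omega : t + 1 ≠ m + 1), Function.update_of_ne ht'.ne]
      exact hp.2 t ht'
    · obtain rfl : t = m := by omega
      simpa [Function.update_apply] using ⟨he, hm, hwe⟩

lemma IsPathIn.exists_circle (hord : ∀ e ∈ G, IsEdgeCol fun v => A v e)
    (hp : IsPathIn A G m u f) {i : ℕ} (hi : i < m) {e : E} (he : e ∈ G) (hne : e ≠ f (m - 1))
    (hm : A (u m) e ≠ 0) (hie : A (u i) e ≠ 0) :
    ∃ k u' f', IsCircle A k u' f' ∧ ∀ s < k, f' s ∈ G := by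
  have hfe : ∀ t < m, f t ≠ e := by
    rintro t ht rfl
    obtain ⟨hf, h1, h2⟩ := hp.2 t ht
    rcases (hord _ hf).eq_or_eq_of_ne_zero (hp.vertex_ne ht) h1 h2 _ hm with h | h
    · have := hp.1 _ le_rfl _ (by omega) h; omega
    · have := hp.1 _ le_rfl _ (by omega) h; exact hne (by rw [show m - 1 = t by omega])
  have hmi : u m ≠ u i := fun h => by have := hp.1 _ le_rfl _ (by omega) h; omega
  refine ⟨m - i + 1, fun t => u (i + t), fun t => if t = m - i then e else f (i + t),
    ⟨by omega, fun s t hs ht h => ?_, fun s t hs ht h => ?_, fun t ht => ?_⟩, fun t ht => ?_⟩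
  · have := hp.1 _ (by omega) _ (by omega) h; omega
  · dsimp only at h
    split_ifs at h with h1 h2 h2
    · omega
    · exact absurd h.symm (hfe _ (by omega))
    · exact absurd h (hfe _ (by omega))
    · have := hp.edge_injOn hord (by omega) (by omega) h; omega
  · dsimp only
    split_ifs with h1
    · rw [h1, Nat.mod_self, show i + (m - i) = m by omega, Nat.add_zero]
      exact ⟨hm, hie, (hord e he).eq_or_eq_of_ne_zero hmi hm hie⟩
    · rw [Nat.mod_eq_of_lt (by omega), ← Nat.add_assoc]
      obtain ⟨hf, h1, h2⟩ := hp.2 (i + t) (by omega)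
      exact ⟨h1, h2, (hord _ hf).eq_or_eq_of_ne_zero (hp.vertex_ne (by omega)) h1 h2⟩
  · dsimp only
    split_ifs
    exacts [he, (hp.2 _ (by omega)).1]

/-- A longest path cannot be extended, so the edges at its last vertex either close a circle
or there is only one of them. -/
theorem exists_isLeaf_of_isCircleFree (hord : ∀ e ∈ G, IsEdgeCol fun v => A v e)
    (hG : G.Nonempty) (hfree : IsCircleFree A G) : ∃ ℓ e₀, IsLeaf A G ℓ e₀ := by
  classical
  obtain ⟨e₀, he₀⟩ := hG
  obtain ⟨p, q, hpq, hp, hq, -⟩ := (hord e₀ he₀).exists_support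
  have hP1 : ∃ u f, IsPathIn A G 1 u f := by
    refine ⟨fun s => if s = 0 then p else q, fun _ => e₀, fun s hs t ht h => ?_, fun t ht => ?_⟩
    · interval_cases s <;> interval_cases t <;> simp_all
    · obtain rfl : t = 0 := by omega
      simp only [if_true]
      exact ⟨he₀, by rcases hp with h | h <;> simp [h], by rcases hq with h | h <;> simp [h]⟩
  have hd : 1 ≤ d := p.pos
  set P : ℕ → Prop := fun m => ∃ u f, IsPathIn A G m u f
  set M := Nat.findGreatest P d
  obtain ⟨u, f, hpath⟩ : P M := Nat.findGreatest_spec hd hP1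
  have hM : 1 ≤ M := Nat.le_findGreatest hd hP1
  by_contra! hno
  obtain ⟨e, he, hMe, hne⟩ : ∃ e ∈ G, A (u M) e ≠ 0 ∧ e ≠ f (M - 1) := by
    obtain ⟨hf, -, h2⟩ := hpath.2 (M - 1) (by omega)
    rw [Nat.sub_add_cancel hM] at h2
    by_contra! h
    exact hno _ _ ⟨hf, h2, h⟩
  obtain ⟨w, hwM, hw, -⟩ := (hord e he).exists_other hMe
  by_cases hnew : ∀ s ≤ M, u s ≠ w
  · have hext := hpath.snoc hnew he hMe hw
    exact Nat.findGreatest_is_greatest (Nat.lt_succ_self M) (by have := hext.succ_le; omega)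
      ⟨_, _, hext⟩
  · push Not at hnew
    obtain ⟨i, hiM, rfl⟩ := hnew
    have hi : i < M := lt_of_le_of_ne hiM fun h => hwM (h ▸ rfl)
    obtain ⟨k, u', f', hc, hf'⟩ := hpath.exists_circle hord hi he hne hMe hw
    exact hfree k u' f' hc hf'

variable [DecidableEq E]

lemma IsLeaf.update_solution {ℓ w : Fin d} {e₀ : E} {x : E → ℤ} {y : Fin d → ℤ} {c : ℤ}
    (hleaf : IsLeaf A G ℓ e₀) (hwℓ : w ≠ ℓ) (hsupp : ∀ v, A v e₀ ≠ 0 → v = ℓ ∨ v = w)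
    (hy : ∀ e ∈ G.erase e₀, (Aᵀ *ᵥ y) e = x e) (hc : A ℓ e₀ * c + A w e₀ * y w = x e₀) :
    ∀ e ∈ G, (Aᵀ *ᵥ Function.update y ℓ c) e = x e := by
  intro e he
  by_cases hee : e = e₀
  · subst hee
    rw [mulVec_transpose_apply_eq_add hwℓ.symm hsupp, Function.update_self,
      Function.update_of_ne hwℓ, hc]
  · rw [← hy e (Finset.mem_erase.2 ⟨hee, he⟩)]
    have hℓ : A ℓ e = 0 := by
      by_contra h
      exact hee (hleaf.2.2 e he h)
    simp only [mulVec, dotProduct, transpose_apply]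
    refine Finset.sum_congr rfl fun v _ => ?_
    by_cases hv : v = ℓ
    · subst hv; simp [hℓ]
    · rw [Function.update_of_ne hv]

/-- Peel off a leaf; if the leaf is the root, the root moves to its neighbour. -/
theorem exists_solution_of_isCircleFree (hord : ∀ e ∈ G, IsEdgeCol fun v => A v e)
    (hfree : IsCircleFree A G) (x : E → ℤ) (r : Fin d) (c : ℤ) :
    ∃ y : Fin d → ℤ, y r = c ∧ ∀ e ∈ G, (Aᵀ *ᵥ y) e = x e := by
  induction G using Finset.strongInduction generalizing r c with
  | H G ih =>
  rcases G.eq_empty_or_nonempty with rfl | hG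
  · exact ⟨fun _ => c, rfl, by simp⟩
  obtain ⟨ℓ, e₀, hleaf⟩ := exists_isLeaf_of_isCircleFree hord hG hfree
  obtain ⟨w, hwℓ, hw, hsupp⟩ := (hord e₀ hleaf.1).exists_other hleaf.2.1
  have hsub : G.erase e₀ ⊂ G := Finset.erase_ssubset hleaf.1
  have IH := ih _ hsub (fun e he => hord e (Finset.mem_of_mem_erase he)) (hfree.mono hsub.subset)
  by_cases hℓr : ℓ = r
  · subst hℓr
    obtain ⟨y, hyw, hy⟩ := IH w (A w e₀ * (x e₀ - A ℓ e₀ * c))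
    refine ⟨Function.update y ℓ c, Function.update_self .., hleaf.update_solution hwℓ hsupp hy ?_⟩
    rw [hyw]
    linear_combination (x e₀ - A ℓ e₀ * c) * (hord e₀ hleaf.1).mul_self_eq_one hw
  · obtain ⟨y, hyr, hy⟩ := IH r c
    refine ⟨Function.update y ℓ (A ℓ e₀ * (x e₀ - A w e₀ * y w)),
      by rwa [Function.update_of_ne (Ne.symm hℓr)], hleaf.update_solution hwℓ hsupp hy ?_⟩
    linear_combination (x e₀ - A w e₀ * y w) * (hord e₀ hleaf.1).mul_self_eq_one hleaf.2.1

lemma solvableOn_of_isCircleFree (hord : ∀ e ∈ G, IsEdgeCol fun v => A v e)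
    (hfree : IsCircleFree A G) (x : E → ℤ) : SolvableOn A G x := by
  rcases G.eq_empty_or_nonempty with rfl | ⟨e, he⟩
  · exact ⟨0, by simp⟩
  obtain ⟨r, -⟩ := (hord e he).exists_support
  obtain ⟨y, -, hy⟩ := exists_solution_of_isCircleFree hord hfree x r 0
  exact ⟨y, hy⟩

end Forests

section Connectivity

variable {d : ℕ} {E : Type*} (A : Matrix (Fin d) E ℤ)

def AdjIn (G : Finset E) (p q : Fin d) : Prop :=
  p ≠ q ∧ ∃ e ∈ G, A p e ≠ 0 ∧ A q e ≠ 0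

variable {A} {G : Finset E}

lemma AdjIn.symm {p q : Fin d} (h : AdjIn A G p q) : AdjIn A G q p :=
  ⟨h.1.symm, h.2.imp fun _ ⟨he, hp, hq⟩ => ⟨he, hq, hp⟩⟩

lemma eq_zero_of_reflTransGen (hord : ∀ e ∈ G, IsEdgeCol fun v => A v e) {y : Fin d → ℤ}
    (hy : ∀ e ∈ G, (Aᵀ *ᵥ y) e = 0) {p q : Fin d} (h : Relation.ReflTransGen (AdjIn A G) p q)
    (hp : y p = 0) : y q = 0 := by
  induction h with
  | refl => exact hp
  | tail _ hbc ih =>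
    obtain ⟨hne, e, he, hb, hc⟩ := hbc
    have := hy e he
    rw [mulVec_transpose_apply_eq_add hne ((hord e he).eq_or_eq_of_ne_zero hne hb hc), ih,
      mul_zero, zero_add] at this
    exact (mul_eq_zero.1 this).resolve_left hc

/-- The map `y ↦ ((Aᵀ y)|_G, y r)` is injective: the edge equations propagate `y r = 0` along
paths. -/
theorem le_card_add_one_of_reachable (hord : ∀ e ∈ G, IsEdgeCol fun v => A v e) (r : Fin d)
    (hconn : ∀ v, Relation.ReflTransGen (AdjIn A G) r v) : d ≤ G.card + 1 := by
  let T : (Fin d → ℤ) →ₗ[ℤ] (G → ℤ) × ℤ :=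
    (LinearMap.pi fun e : G => (LinearMap.proj (e : E)).comp Aᵀ.mulVecLin).prod
      (LinearMap.proj r)
  have hT : Function.Injective T := by
    refine (injective_iff_map_eq_zero T).2 fun y hy => funext fun v => ?_
    have hG : ∀ e : G, (Aᵀ *ᵥ y) e = 0 := congrFun (congrArg Prod.fst hy)
    exact eq_zero_of_reflTransGen hord (fun e he => hG ⟨e, he⟩) (hconn v) (congrArg Prod.snd hy)
  simpa [Module.finrank_prod, Module.finrank_fintype_fun_eq_card] using
    LinearMap.finrank_le_finrank_of_injective hT

variable [DecidableEq E] {k : ℕ} {u : ℕ → Fin d} {f : ℕ → E}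

lemma IsCircle.reflTransGen_erase (hc : IsCircle A k u f) (hG : ∀ s < k, f s ∈ G)
    {p q : Fin d} (h : Relation.ReflTransGen (AdjIn A G) p q) :
    Relation.ReflTransGen (AdjIn A (G.erase (f 0))) p q := by
  have hk := hc.1
  have hwalk : ∀ T, 1 ≤ T → T ≤ k →
      Relation.ReflTransGen (AdjIn A (G.erase (f 0))) (u 1) (u (T % k)) := by
    intro T h1
    induction T, h1 using Nat.le_induction with
    | base => intro; rw [Nat.mod_eq_of_lt (by omega)]
    | succ T hT ih =>
      intro hTk
      refine (ih (by omega)).tail ?_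
      rw [Nat.mod_eq_of_lt (by omega : T < k)]
      obtain ⟨h1, h2, -⟩ := hc.2.2.2 T (by omega)
      refine ⟨hc.vertex_ne (by omega), f T, Finset.mem_erase.2 ⟨fun h => ?_, hG T (by omega)⟩,
        h1, h2⟩
      have := hc.2.2.1 T 0 (by omega) (by omega) h
      omega
  have h10 := hwalk k (by omega) le_rfl
  rw [Nat.mod_self] at h10
  have h01 : Relation.ReflTransGen (AdjIn A (G.erase (f 0))) (u 0) (u 1) :=
    Relation.ReflTransGen.mono (fun _ _ h => AdjIn.symm h) _ _ (Relation.ReflTransGen.swap _ _ h10)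
  induction h with
  | refl => exact .refl
  | tail _ hbc ih =>
    obtain ⟨hne, e, he, hb, hc'⟩ := hbc
    by_cases hef : e = f 0
    · subst hef
      have hsupp := (hc.2.2.2 0 (by omega)).2.2
      rw [Nat.mod_eq_of_lt (by omega : 0 + 1 < k)] at hsupp
      rcases hsupp _ hb with rfl | rfl <;> rcases hsupp _ hc' with rfl | rfl
      · exact absurd rfl hne
      · exact ih.trans h01
      · exact ih.trans h10
      · exact absurd rfl hne
    · exact ih.tail ⟨hne, e, Finset.mem_erase.2 ⟨hef, he⟩, hb, hc'⟩

/-- Removing an edge of a circle keeps `G` connected, which `le_card_add_one_of_reachable`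
forbids. -/
theorem isCircleFree_of_reachable (hord : ∀ e ∈ G, IsEdgeCol fun v => A v e) (r : Fin d)
    (hconn : ∀ v, Relation.ReflTransGen (AdjIn A G) r v) (hcard : G.card + 1 ≤ d) :
    IsCircleFree A G := by
  intro k u f hc hG
  have hf0 := hG 0 (by have := hc.1; omega)
  have h := le_card_add_one_of_reachable (fun e he => hord e (Finset.mem_of_mem_erase he)) r
    fun v => hc.reflTransGen_erase hG (hconn v)
  rw [Finset.card_erase_of_mem hf0] at h
  have := Finset.card_pos.2 ⟨_, hf0⟩
  omega

end Connectivity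

section Weights

variable {m E : Type*} [Fintype m] [Fintype E] [DecidableEq E] {A : Matrix m E ℤ} {F : Finset E}

lemma dotProduct_eq_add_sum {R : Type*} [NonUnitalNonAssocSemiring R] {a z : E → R} {e₀ : E}
    (he₀ : e₀ ∉ F) (hsupp : ∀ e, a e ≠ 0 → e ∈ F ∨ e = e₀) :
    a ⬝ᵥ z = a e₀ * z e₀ + ∑ e ∈ F, a e * z e := by
  rw [dotProduct, ← Finset.sum_insert he₀ (f := fun e => a e * z e)]
  refine (Finset.sum_subset (Finset.subset_univ _) fun e _ he => ?_).symm
  have : a e = 0 := by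
    by_contra h
    rcases hsupp e h with h | rfl
    exacts [he (Finset.mem_insert_of_mem h), he (Finset.mem_insert_self _ _)]
  simp [this]

lemma dvd_sum_of_solvableOn {a x : E → ℤ} {e₀ : E} (hker : a ᵥ* Aᵀ = 0) (he₀ : e₀ ∉ F)
    (hsupp : ∀ e, a e ≠ 0 → e ∈ F ∨ e = e₀) (hx : SolvableOn A F x) :
    a e₀ ∣ ∑ e ∈ F, a e * x e := by
  obtain ⟨y, hy⟩ := hx
  have h := dotProduct_eq_add_sum (z := Aᵀ *ᵥ y) he₀ hsupp
  rw [dotProduct_mulVec_eq_zero hker] at h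
  have hF : ∑ e ∈ F, a e * x e = ∑ e ∈ F, a e * (Aᵀ *ᵥ y) e :=
    Finset.sum_congr rfl fun e he => by rw [hy e he]
  exact ⟨-(Aᵀ *ᵥ y) e₀, by linarith⟩

lemma dvd_of_forall_dvd_mul {a : E → ℤ} {e₀ : E} {c n : ℤ}
    (hsupp : ∀ e, a e ≠ 0 → e ∈ F ∨ e = e₀) (hprim : Finset.univ.gcd a = 1)
    (h₀ : c ∣ n * a e₀) (hF : ∀ e ∈ F, c ∣ n * a e) : c ∣ n := by
  have h : ∀ e ∈ Finset.univ, c ∣ n * a e := fun e _ => by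
    by_cases he : e ∈ F
    · exact hF e he
    rcases eq_or_ne e e₀ with rfl | hne
    · exact h₀
    have : a e = 0 := by
      by_contra h
      exact (hsupp e h).elim he hne
    simp [this]
  simpa [Finset.gcd_mul_left, hprim] using Finset.dvd_gcd h

lemma apply_eq_one_of_forall_solvableOn {a : E → ℤ} {e₀ : E} (hker : a ᵥ* Aᵀ = 0)
    (he₀ : e₀ ∉ F) (hsupp : ∀ e, a e ≠ 0 → e ∈ F ∨ e = e₀) (hprim : Finset.univ.gcd a = 1)
    (hpos : 0 < a e₀) (hsolv : ∀ x, SolvableOn A F x) : a e₀ = 1 := by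
  refine Int.eq_one_of_dvd_one hpos.le
    (dvd_of_forall_dvd_mul hsupp hprim (by simp) fun e he => ?_)
  simpa [Pi.single_apply, he] using dvd_sum_of_solvableOn hker he₀ hsupp (hsolv (Pi.single e 1))

variable {t : ℕ} {ε : Fin t → E} {a : Fin t → E → ℤ}

lemma eq_mulVec_of_weights_eq_zero (hεrange : ∀ e, e ∈ Set.range ε ↔ e ∉ F)
    (hker : ∀ i, a i ᵥ* Aᵀ = 0) (hsupp : ∀ i e, a i e ≠ 0 → e ∈ F ∨ e = ε i)
    (hne : ∀ i, a i (ε i) ≠ 0) {x : E → ℤ} {y : m → ℤ} (hx : ∀ i, a i ⬝ᵥ x = 0)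
    (hy : ∀ e ∈ F, (Aᵀ *ᵥ y) e = x e) : x = Aᵀ *ᵥ y := by
  funext e
  by_cases he : e ∈ F
  · exact (hy e he).symm
  obtain ⟨i, rfl⟩ := (hεrange e).2 he
  have hz : a i ⬝ᵥ (x - Aᵀ *ᵥ y) = 0 := by
    rw [dotProduct_sub, hx i, dotProduct_mulVec_eq_zero (hker i), sub_zero]
  rw [dotProduct_eq_add_sum he (hsupp i), Finset.sum_eq_zero fun e he => by simp [hy e he],
    add_zero] at hz
  exact sub_eq_zero.1 ((mul_eq_zero.1 hz).resolve_left (hne i))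

lemma exists_weights_eq (hεinj : Function.Injective ε)
    (hεrange : ∀ e, e ∈ Set.range ε ↔ e ∉ F) (hsupp : ∀ i e, a i e ≠ 0 → e ∈ F ∨ e = ε i)
    (hunit : ∀ i, a i (ε i) = 1) (z : Fin t → ℤ) (w : E → ℤ) :
    ∃ x : E → ℤ, (∀ i, a i ⬝ᵥ x = z i) ∧ ∀ e ∈ F, x e = w e := by
  set g := Function.extend ε (fun i => z i - a i ⬝ᵥ w) 0
  have hg : ∀ e ∈ F, g e = 0 := fun e he =>
    Function.extend_apply' _ _ _ fun ⟨i, hi⟩ => (hεrange e).1 ⟨i, hi⟩ he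
  refine ⟨w + g, fun i => ?_, fun e he => by simp [hg e he]⟩
  rw [dotProduct_add, dotProduct_eq_add_sum ((hεrange _).1 ⟨i, rfl⟩) (hsupp i) (z := g),
    Finset.sum_eq_zero fun e he => by simp [hg e he], hunit i,
    show g (ε i) = z i - a i ⬝ᵥ w from hεinj.extend_apply _ _ _]
  ring

theorem weights_exact_of_forall_solvableOn (hεinj : Function.Injective ε)
    (hεrange : ∀ e, e ∈ Set.range ε ↔ e ∉ F) (hker : ∀ i, a i ᵥ* Aᵀ = 0)
    (hprim : ∀ i, Finset.univ.gcd (a i) = 1) (hsupp : ∀ i e, a i e ≠ 0 → e ∈ F ∨ e = ε i)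
    (hpos : ∀ i, 0 < a i (ε i)) (hsolv : ∀ x, SolvableOn A F x) :
    Function.Surjective (fun (x : E → ℤ) (i : Fin t) => a i ⬝ᵥ x) ∧
      ∀ x : E → ℤ, (∀ i, a i ⬝ᵥ x = 0) ↔ ∃ y : m → ℤ, x = Aᵀ *ᵥ y := by
  have hunit : ∀ i, a i (ε i) = 1 := fun i => apply_eq_one_of_forall_solvableOn (hker i)
    ((hεrange _).1 ⟨i, rfl⟩) (hsupp i) (hprim i) (hpos i) hsolv
  refine ⟨fun z => ?_, fun x => ⟨fun hx => ?_, ?_⟩⟩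
  · obtain ⟨x, hx, -⟩ := exists_weights_eq hεinj hεrange hsupp hunit z 0
    exact ⟨x, funext hx⟩
  · obtain ⟨y, hy⟩ := hsolv x
    exact ⟨y, eq_mulVec_of_weights_eq_zero hεrange hker hsupp (by simp [hunit]) hx hy⟩
  · rintro ⟨y, rfl⟩ i
    exact dotProduct_mulVec_eq_zero (hker i) y

theorem weights_exact_of_solvableOn_iff (hεinj : Function.Injective ε)
    (hεrange : ∀ e, e ∈ Set.range ε ↔ e ∉ F) (hker : ∀ i, a i ᵥ* Aᵀ = 0)
    (hsupp : ∀ i e, a i e ≠ 0 → e ∈ F ∨ e = ε i) (hunit : ∀ i, a i (ε i) = 1) {N : Finset E}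
    (hNF : N ⊆ F) (hN : N.Nonempty)
    (hsolv : ∀ x, SolvableOn A F x ↔ ((∑ e ∈ N, x e : ℤ) : ZMod 2) = 0) :
    Function.Surjective (fun x : E → ℤ =>
        ((fun i => a i ⬝ᵥ x, ((∑ e ∈ N, x e : ℤ) : ZMod 2)) : (Fin t → ℤ) × ZMod 2)) ∧
      ∀ x : E → ℤ, ((∀ i, a i ⬝ᵥ x = 0) ∧ ((∑ e ∈ N, x e : ℤ) : ZMod 2) = 0) ↔
        ∃ y : m → ℤ, x = Aᵀ *ᵥ y := by
  refine ⟨fun ⟨z, b⟩ => ?_, fun x => ⟨fun ⟨hx, hpar⟩ => ?_, ?_⟩⟩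
  · obtain ⟨e₀, he₀⟩ := hN
    obtain ⟨n, rfl⟩ := ZMod.intCast_surjective b
    obtain ⟨x, hx, hxF⟩ := exists_weights_eq hεinj hεrange hsupp hunit z (Pi.single e₀ n)
    refine ⟨x, Prod.ext (funext hx) ?_⟩
    simp only
    rw [Finset.sum_congr rfl fun e he => hxF e (hNF he), Finset.sum_pi_single', if_pos he₀]
  · obtain ⟨y, hy⟩ := (hsolv x).2 hpar
    exact ⟨y, eq_mulVec_of_weights_eq_zero hεrange hker hsupp (by simp [hunit]) hx hy⟩
  · rintro ⟨y, rfl⟩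
    exact ⟨fun i => dotProduct_mulVec_eq_zero (hker i) y, (hsolv _).1 ⟨y, fun _ _ => rfl⟩⟩

end Weights

section NegativeCircles

variable {d : ℕ} {E : Type*} {A : Matrix (Fin d) E ℤ} {k : ℕ} {u : ℕ → Fin d} {f : ℕ → E}

lemma IsCircle.two_dvd_sum_mulVec (hA : IsBidirected A) (hc : IsCircle A k u f)
    (hsign : circleSign A k u f = -1) (y : Fin d → ℤ) :
    2 ∣ ∑ t ∈ Finset.range k, (Aᵀ *ᵥ y) (f t) := by
  obtain ⟨c, -, hc1, hdep⟩ := hc.exists_dependency hA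
  rw [← two_dvd_sum_mul_iff fun t ht => hc1 t (by simpa using ht), sum_mul_mulVec_transpose_eq hdep,
    hsign]
  exact ⟨A (u 0) (f 0) * y (u 0), by ring⟩

variable [DecidableEq E]

def circleEdgeCount (k : ℕ) (f : ℕ → E) (e : E) : ℤ :=
  ∑ t ∈ Finset.range k, if f t = e then 1 else 0

/-- With `y (u 0)` chosen to balance the dependency of the circle, solving the tree
`F \ {f 0}` also solves the edge `f 0`. -/
theorem IsCircle.solvableOn_of_two_dvd {F : Finset E} (hA : IsBidirected A)
    (hc : IsCircle A k u f) (hsign : circleSign A k u f = -1) (hfF : ∀ s < k, f s ∈ F)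
    (hord : ∀ e ∈ F, IsEdgeCol fun v => A v e) (hfree : IsCircleFree A (F.erase (f 0)))
    {x : E → ℤ} (hx : 2 ∣ ∑ t ∈ Finset.range k, x (f t)) : SolvableOn A F x := by
  obtain ⟨c, hc0, hc1, hdep⟩ := hc.exists_dependency hA
  have hk : 0 < k := by have := hc.1; omega
  obtain ⟨n, hn⟩ := (two_dvd_sum_mul_iff fun t ht => hc1 t (by simpa using ht)).2 hx
  obtain ⟨y, hyr, hy⟩ := exists_solution_of_isCircleFree
    (fun e he => hord e (Finset.mem_of_mem_erase he)) hfree x (u 0) (A (u 0) (f 0) * n)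
  refine ⟨y, fun e he => ?_⟩
  rcases eq_or_ne e (f 0) with rfl | hne
  swap
  · exact hy e (Finset.mem_erase.2 ⟨hne, he⟩)
  have hrest : ∀ t ∈ (Finset.range k).erase 0, c t * (Aᵀ *ᵥ y) (f t) = c t * x (f t) := by
    intro t ht
    obtain ⟨ht0, ht⟩ := Finset.mem_erase.1 ht
    rw [hy]
    exact Finset.mem_erase.2
      ⟨fun h => ht0 (hc.2.2.1 t 0 (by simpa using ht) hk h), hfF t (by simpa using ht)⟩
  have h := sum_mul_mulVec_transpose_eq hdep y
  rw [← Finset.add_sum_erase _ _ (Finset.mem_range.2 hk), Finset.sum_congr rfl hrest, hsign,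
    hyr, hc0] at h
  rw [← Finset.add_sum_erase _ _ (Finset.mem_range.2 hk), hc0] at hn
  linear_combination h - hn + 2 * n * hA.mul_self_eq_one (hc.2.2.2 0 hk).1

variable [Fintype E]

lemma sum_circleEdgeCount_mul (w : E → ℤ) :
    ∑ e, circleEdgeCount k f e * w e = ∑ t ∈ Finset.range k, w (f t) := by
  simp only [circleEdgeCount, Finset.sum_mul, ite_mul, one_mul, zero_mul]
  rw [Finset.sum_comm]
  simp

/-- Pair both `a` and the circle dependency with the even column sums `Aᵀ 1`: the results `0`
and `2 A(u 0, f 0)` would agree mod 4. -/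
lemma IsCircle.not_forall_two_dvd_sub_circleEdgeCount (hA : IsBidirected A)
    (hnh : ¬ HasHalfedge A) (hc : IsCircle A k u f) (hsign : circleSign A k u f = -1)
    {a : E → ℤ} (hker : a ᵥ* Aᵀ = 0) : ¬ ∀ e, 2 ∣ a e - circleEdgeCount k f e := by
  intro hpar
  obtain ⟨c, -, hc1, hdep⟩ := hc.exists_dependency hA
  set w := Aᵀ *ᵥ fun _ => (1 : ℤ)
  have hw : ∀ e, 2 ∣ w e := fun e => by
    simpa [w, mulVec, dotProduct] using (hA.isEdgeCol hnh e).two_dvd_sum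
  have h1 := two_mul_dvd_sum_mul_sub (s := Finset.univ) (p := a) (q := circleEdgeCount k f)
    (fun e _ => hpar e) fun e _ => hw e
  have h2 := two_mul_dvd_sum_mul_sub (s := Finset.range k) (p := fun _ => 1) (q := c)
    (w := fun t => w (f t)) (fun t ht => two_dvd_one_sub (hc1 t (by simpa using ht)))
    fun t _ => hw (f t)
  have ha : ∑ e, a e * w e = 0 := dotProduct_mulVec_eq_zero hker _
  rw [ha, sum_circleEdgeCount_mul] at h1
  rw [sum_mul_mulVec_transpose_eq hdep, hsign] at h2
  simp only [one_mul] at h2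
  have h0 := (hA.mul_self_eq_one (hc.2.2.2 0 (by have := hc.1; omega)).1)
  obtain ⟨q₁, hq₁⟩ := h1
  obtain ⟨q₂, hq₂⟩ := h2
  rcases Int.isUnit_iff.1 (.of_mul_eq_one_right _ h0) with h | h <;> rw [h] at hq₂ <;> omega

/-- Testing `x = δ_e + (count e) δ_{f 0}` gives `a ≡ a (f 0) · count` mod 2, and primitivity
makes `a (f 0)` odd. -/
lemma IsCircle.two_dvd_sub_circleEdgeCount {F : Finset E} (hc : IsCircle A k u f)
    (hfF : ∀ s < k, f s ∈ F) {a : E → ℤ} {e₀ : E} (hsupp : ∀ e, a e ≠ 0 → e ∈ F ∨ e = e₀)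
    (hprim : Finset.univ.gcd a = 1) (h₀ : a e₀ = 2)
    (hdvd : ∀ x : E → ℤ, 2 ∣ ∑ t ∈ Finset.range k, x (f t) → 2 ∣ ∑ e ∈ F, a e * x e)
    (e : E) : 2 ∣ a e - circleEdgeCount k f e := by
  have hk : 0 < k := by have := hc.1; omega
  have hsingle : ∀ n : ℤ, ∑ t ∈ Finset.range k, (Pi.single (f 0) n : E → ℤ) (f t) = n := by
    intro n
    rw [Finset.sum_eq_single 0 (fun t ht ht0 => Pi.single_eq_of_ne
        (fun h => ht0 (hc.2.2.1 t 0 (by simpa using ht) hk h)) _) (by simp [hk])]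
    simp
  have hpair : ∀ e ∈ F, 2 ∣ a e + a (f 0) * circleEdgeCount k f e := fun e he => by
    set n := circleEdgeCount k f e
    have hx : ∑ t ∈ Finset.range k, (Pi.single e 1 + Pi.single (f 0) n : E → ℤ) (f t) =
        2 * n := by
      simp only [Pi.add_apply]
      rw [Finset.sum_add_distrib, hsingle, two_mul]
      simp only [Pi.single_apply, n, circleEdgeCount]
    simpa [Pi.single_apply, he, hfF 0 hk, mul_add, Finset.sum_add_distrib] using
      hdvd _ ⟨n, hx⟩
  have hodd : ¬ 2 ∣ a (f 0) := by
    intro hf0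
    have : (2 : ℤ) ∣ 1 := dvd_of_forall_dvd_mul hsupp hprim (by simp [h₀]) fun e he => by
      simpa using (dvd_add_left (dvd_mul_of_dvd_left hf0 _)).1 (hpair e he)
    norm_num at this
  by_cases he : e ∈ F
  · have hodd' : 2 ∣ a (f 0) + 1 := by omega
    have h' := dvd_sub (hpair e he) (dvd_mul_of_dvd_left hodd' (circleEdgeCount k f e))
    rwa [show a e + a (f 0) * circleEdgeCount k f e - (a (f 0) + 1) * circleEdgeCount k f e =
      a e - circleEdgeCount k f e by ring] at h'
  · have hcount : circleEdgeCount k f e = 0 :=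
      Finset.sum_eq_zero fun t ht =>
        if_neg fun (h : f t = e) => he (h ▸ hfF t (by simpa using ht))
    rcases eq_or_ne e e₀ with rfl | hne
    · simp [h₀, hcount]
    · have : a e = 0 := by
        by_contra h'
        exact (hsupp e h').elim he hne
      simp [this, hcount]

theorem IsCircle.apply_eq_one_of_solvableOn {F : Finset E} (hA : IsBidirected A)
    (hnh : ¬ HasHalfedge A) (hc : IsCircle A k u f) (hsign : circleSign A k u f = -1)
    (hfF : ∀ s < k, f s ∈ F)
    (hsolv : ∀ x : E → ℤ, 2 ∣ ∑ t ∈ Finset.range k, x (f t) → SolvableOn A F x)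
    {a : E → ℤ} {e₀ : E} (hker : a ᵥ* Aᵀ = 0) (he₀ : e₀ ∉ F)
    (hsupp : ∀ e, a e ≠ 0 → e ∈ F ∨ e = e₀) (hprim : Finset.univ.gcd a = 1) (hpos : 0 < a e₀) :
    a e₀ = 1 := by
  have hdvd : ∀ x : E → ℤ, 2 ∣ ∑ t ∈ Finset.range k, x (f t) → a e₀ ∣ ∑ e ∈ F, a e * x e :=
    fun x hx => dvd_sum_of_solvableOn hker he₀ hsupp (hsolv x hx)
  have h2 : a e₀ ∣ 2 := dvd_of_forall_dvd_mul hsupp hprim (dvd_mul_left _ _) fun e he => by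
    have := hdvd (Pi.single e 2) (Finset.dvd_sum fun t _ => by
      rw [Pi.single_apply]; split_ifs <;> norm_num)
    simpa [Pi.single_apply, he, mul_comm] using this
  obtain h | h : a e₀ = 1 ∨ a e₀ = 2 := by have := Int.le_of_dvd two_pos h2; omega
  · exact h
  · exact absurd (hc.two_dvd_sub_circleEdgeCount hfF hsupp hprim h (h ▸ hdvd))
      (hc.not_forall_two_dvd_sub_circleEdgeCount hA hnh hsign hker)

end NegativeCircles

section Cases

variable {d : ℕ} {E : Type*} {A : Matrix (Fin d) E ℤ} {F : Finset E}

theorem isCircleFree_of_linearIndependent (hA : IsBidirected A)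
    (hposc : ∀ k u f, IsCircle A k u f → circleSign A k u f = 1)
    (hlin : LinearIndependent ℝ fun e : F => fun v => (A v (e : E) : ℝ)) : IsCircleFree A F := by
  intro k u f hc hf
  obtain ⟨c, hc0, -, hdep⟩ := hc.exists_dependency hA
  have hk : 0 < k := by have := hc.1; omega
  have hinj : Function.Injective fun t : Fin k => (⟨f t, hf t t.2⟩ : F) := fun s t h =>
    Fin.ext (hc.2.2.1 s t s.2 t.2 (congrArg Subtype.val h))
  have h0 := Fintype.linearIndependent_iff.1 (hlin.comp _ hinj) (fun t => (c t : ℝ)) ?_ ⟨0, hk⟩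
  · simp [hc0] at h0
  · funext v
    have := congrArg (Int.cast : ℤ → ℝ) (hdep v)
    simp only [hposc k u f hc, sub_self, zero_mul, ite_self, Int.cast_zero, Int.cast_sum,
      Int.cast_mul, Finset.sum_range] at this
    simpa [Finset.sum_apply] using this

variable [DecidableEq E]

theorem solvableOn_of_halfedge_tree (hA : IsBidirected A) (hcard : F.card = d)
    (hhalf : ∃! e, e ∈ F ∧ IsHalfedgeCol fun v => A v e)
    (hconn : ∀ p q, Relation.ReflTransGen (AdjIn A F) p q) (x : E → ℤ) : SolvableOn A F x := by
  obtain ⟨h, ⟨hhF, hcol⟩, huniq⟩ := hhalf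
  obtain ⟨w, hw, hsupp⟩ := hcol.exists_support
  have hord : ∀ e ∈ F.erase h, IsEdgeCol fun v => A v e := fun e he =>
    (hA e).resolve_left fun hh =>
      (Finset.mem_erase.1 he).1 (huniq e ⟨Finset.mem_of_mem_erase he, hh⟩)
  have hadj : AdjIn A F ≤ AdjIn A (F.erase h) := by
    rintro p q ⟨hpq, e, he, hp, hq⟩
    refine ⟨hpq, e, Finset.mem_erase.2 ⟨?_, he⟩, hp, hq⟩
    rintro rfl
    exact hpq ((hsupp p hp).trans (hsupp q hq).symm)
  have hfree := isCircleFree_of_reachable hord w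
    (fun v => Relation.ReflTransGen.mono hadj _ _ (hconn w v))
    (by rw [Finset.card_erase_of_mem hhF]; have := w.pos; omega)
  obtain ⟨y, hyw, hy⟩ := exists_solution_of_isCircleFree hord hfree x w (A w h * x h)
  refine ⟨y, fun e he => ?_⟩
  rcases eq_or_ne e h with rfl | hne
  · rw [mulVec_transpose_apply_eq_single hsupp, hyw, ← mul_assoc]
    rcases hw with hw | hw <;> simp [hw]
  · exact hy e (Finset.mem_erase.2 ⟨hne, he⟩)

theorem IsCircle.isCircleFree_erase {k : ℕ} {u : ℕ → Fin d} {f : ℕ → E}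
    (hc : IsCircle A k u f)
    (huniq : ∀ k' u' f', IsCircle A k' u' f' → (∀ s < k', f' s ∈ F) →
      (Finset.range k').image f' = (Finset.range k).image f) :
    IsCircleFree A (F.erase (f 0)) := by
  intro k' u' f' hc' hf'
  have hk : 0 < k := by have := hc.1; omega
  obtain ⟨s, hs, hsf⟩ := Finset.mem_image.1
    ((huniq k' u' f' hc' fun s hs => Finset.mem_of_mem_erase (hf' s hs)) ▸
      Finset.mem_image_of_mem f (Finset.mem_range.2 hk))
  exact Finset.ne_of_mem_erase (hf' s (by simpa using hs)) hsf

theorem IsCircle.solvableOn_iff_two_dvd {k : ℕ} {u : ℕ → Fin d} {f : ℕ → E}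
    (hA : IsBidirected A) (hnh : ¬ HasHalfedge A) (hc : IsCircle A k u f)
    (hsign : circleSign A k u f = -1) (hfF : ∀ s < k, f s ∈ F)
    (hfree : IsCircleFree A (F.erase (f 0))) (x : E → ℤ) :
    SolvableOn A F x ↔ 2 ∣ ∑ t ∈ Finset.range k, x (f t) := by
  refine ⟨fun ⟨y, hy⟩ => ?_, hc.solvableOn_of_two_dvd hA hsign hfF
    (fun e _ => hA.isEdgeCol hnh e) hfree⟩
  rw [← Finset.sum_congr rfl fun t ht => hy _ (hfF t (by simpa using ht))]
  exact hc.two_dvd_sum_mulVec hA hsign y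

end Cases

theorem weights_exact_sequence_general
    (d : ℕ) (E : Type*) [Fintype E] [DecidableEq E]
    (A : Matrix (Fin d) E ℤ)
    (hA : IsBidirected A)
    -- the chosen maximal signed pseudo-forest `F` and the remaining edges `ε_1, …, ε_t`
    (F : Finset E) (t : ℕ)
    (ε : Fin t → E) (hεinj : Function.Injective ε)
    (hεrange : ∀ e, e ∈ Set.range ε ↔ e ∉ F)
    -- the fundamental-circuit kernel vectors `a_i`
    (a : Fin t → E → ℤ)
    (hker : ∀ i v, ∑ e, a i e * A v e = 0)
    (hprim : ∀ i, Finset.univ.gcd (a i) = 1)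
    (hsupp : ∀ i e, a i e ≠ 0 → e ∈ F ∨ e = ε i)
    (hpos : ∀ i, 0 < a i (ε i))
    -- the edge set `N` of the unique negative circle of `F` (relevant in Case 3 only)
    (N : Finset E) :
    -- Case 1: no halfedges and every circle positive; `F` is a spanning signed tree
    (((¬ HasHalfedge A) ∧ (∀ k u f, IsCircle A k u f → circleSign A k u f = 1) ∧
        F.card = d - 1 ∧
        LinearIndependent ℝ fun e : F => fun v => (A v (e : E) : ℝ)) →
      (Function.Surjective (fun (x : E → ℤ) (i : Fin t) => ∑ e, a i e * x e) ∧
        ∀ x : E → ℤ, (∀ i, ∑ e, a i e * x e = 0) ↔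
          ∃ y : Fin d → ℤ, x = Aᵀ.mulVec y)) ∧
    -- Case 2: there is a halfedge; `F` is a spanning signed halfedge-tree
    ((HasHalfedge A ∧ F.card = d ∧
        (∃! e, e ∈ F ∧ IsHalfedgeCol fun v => A v e) ∧
        (∀ i j : Fin d, Relation.ReflTransGen
          (fun u v => u ≠ v ∧ ∃ e ∈ F, A u e ≠ 0 ∧ A v e ≠ 0) i j)) →
      (Function.Surjective (fun (x : E → ℤ) (i : Fin t) => ∑ e, a i e * x e) ∧
        ∀ x : E → ℤ, (∀ i, ∑ e, a i e * x e = 0) ↔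
          ∃ y : Fin d → ℤ, x = Aᵀ.mulVec y)) ∧
    -- Case 3: no halfedges but a negative circle exists; `F` is a spanning signed
    -- pseudo-tree whose unique circle is negative with edge set `N`
    (((¬ HasHalfedge A) ∧
        (∃ k u f, IsCircle A k u f ∧ circleSign A k u f = -1) ∧
        F.card = d ∧
        (∀ i j : Fin d, Relation.ReflTransGen
          (fun u v => u ≠ v ∧ ∃ e ∈ F, A u e ≠ 0 ∧ A v e ≠ 0) i j) ∧
        N ⊆ F ∧
        (∃ k u f, IsCircle A k u f ∧ (∀ s < k, f s ∈ F) ∧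
          circleSign A k u f = -1 ∧ (Finset.range k).image f = N) ∧
        (∀ k u f, IsCircle A k u f → (∀ s < k, f s ∈ F) →
          (Finset.range k).image f = N)) →
      (Function.Surjective (fun (x : E → ℤ) =>
          ((fun i : Fin t => ∑ e, a i e * x e, ((∑ e ∈ N, x e : ℤ) : ZMod 2)) :
            (Fin t → ℤ) × ZMod 2)) ∧
        ∀ x : E → ℤ,
          ((∀ i, ∑ e, a i e * x e = 0) ∧ ((∑ e ∈ N, x e : ℤ) : ZMod 2) = 0) ↔
          ∃ y : Fin d → ℤ, x = Aᵀ.mulVec y)) := by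
  have hker' : ∀ i, a i ᵥ* Aᵀ = 0 := fun i => funext (hker i)
  refine ⟨fun ⟨hnh, hposc, _, hlin⟩ => ?_, fun ⟨_, hcard, hhalf, hconn⟩ => ?_,
    fun ⟨hnh, _, _, _, hNF, ⟨k, u, f, hc, hfF, hsign, hN⟩, huniq⟩ => ?_⟩
  · exact weights_exact_of_forall_solvableOn hεinj hεrange hker' hprim hsupp hpos
      (solvableOn_of_isCircleFree (fun e _ => hA.isEdgeCol hnh e)
        (isCircleFree_of_linearIndependent hA hposc hlin))
  · exact weights_exact_of_forall_solvableOn hεinj hεrange hker' hprim hsupp hpos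
      (solvableOn_of_halfedge_tree hA hcard hhalf hconn)
  have hk : 0 < k := by have := hc.1; omega
  have hsolv := hc.solvableOn_iff_two_dvd hA hnh hsign hfF
    (hc.isCircleFree_erase fun k' u' f' hc' hf' => (huniq k' u' f' hc' hf').trans hN.symm)
  have hNsum : ∀ x : E → ℤ, ∑ e ∈ N, x e = ∑ t ∈ Finset.range k, x (f t) := fun x => by
    rw [← hN, Finset.sum_image fun s hs t ht h =>
      hc.2.2.1 s t (by simpa using hs) (by simpa using ht) h]
  refine weights_exact_of_solvableOn_iff hεinj hεrange hker' hsupp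
    (fun i => hc.apply_eq_one_of_solvableOn hA hnh hsign hfF (fun x => (hsolv x).2) (hker' i)
      ((hεrange _).1 ⟨i, rfl⟩) (hsupp i) (hprim i) (hpos i))
    hNF ⟨f 0, hN ▸ Finset.mem_image_of_mem f (Finset.mem_range.2 hk)⟩ fun x => ?_
  rw [hsolv, hNsum, ZMod.intCast_zmod_eq_zero_iff_dvd]
  norm_num

/-- Exactness of the weight map for the toric ring of a signed poset: the map
`φ(x) = (⟨a_1,x⟩, …, ⟨a_t,x⟩)` (with an extra `Σ_{e ∈ N} x e mod 2` component in
Case 3) is surjective with kernel exactly `A^T ℤ^d`. -/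
theorem weights_exact_sequence
    (d : ℕ) (hd : 1 ≤ d) (E : Type*) [Fintype E] [DecidableEq E]
    (A : Matrix (Fin d) E ℤ)
    (hA : IsBidirected A) (hconn : ConnectedInc A)
    -- the chosen maximal signed pseudo-forest `F` and the remaining edges `ε_1, …, ε_t`
    (F : Finset E) (t : ℕ) (ht : t = Fintype.card E - F.card)
    (ε : Fin t → E) (hεinj : Function.Injective ε)
    (hεrange : ∀ e, e ∈ Set.range ε ↔ e ∉ F)
    -- the fundamental-circuit kernel vectors `a_i`
    (a : Fin t → E → ℤ)
    (hker : ∀ i v, ∑ e, a i e * A v e = 0)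
    (hprim : ∀ i, Finset.univ.gcd (a i) = 1)
    (hsupp : ∀ i e, a i e ≠ 0 → e ∈ F ∨ e = ε i)
    (hpos : ∀ i, 0 < a i (ε i))
    -- the edge set `N` of the unique negative circle of `F` (relevant in Case 3 only)
    (N : Finset E) :
    -- Case 1: no halfedges and every circle positive; `F` is a spanning signed tree
    (((¬ HasHalfedge A) ∧ (∀ k u f, IsCircle A k u f → circleSign A k u f = 1) ∧
        F.card = d - 1 ∧
        LinearIndependent ℝ fun e : F => fun v => (A v (e : E) : ℝ)) →
      (Function.Surjective (fun (x : E → ℤ) (i : Fin t) => ∑ e, a i e * x e) ∧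
        ∀ x : E → ℤ, (∀ i, ∑ e, a i e * x e = 0) ↔
          ∃ y : Fin d → ℤ, x = Aᵀ.mulVec y)) ∧
    -- Case 2: there is a halfedge; `F` is a spanning signed halfedge-tree
    ((HasHalfedge A ∧ F.card = d ∧
        (∃! e, e ∈ F ∧ IsHalfedgeCol fun v => A v e) ∧
        (∀ i j : Fin d, Relation.ReflTransGen
          (fun u v => u ≠ v ∧ ∃ e ∈ F, A u e ≠ 0 ∧ A v e ≠ 0) i j)) →
      (Function.Surjective (fun (x : E → ℤ) (i : Fin t) => ∑ e, a i e * x e) ∧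
        ∀ x : E → ℤ, (∀ i, ∑ e, a i e * x e = 0) ↔
          ∃ y : Fin d → ℤ, x = Aᵀ.mulVec y)) ∧
    -- Case 3: no halfedges but a negative circle exists; `F` is a spanning signed
    -- pseudo-tree whose unique circle is negative with edge set `N`
    (((¬ HasHalfedge A) ∧
        (∃ k u f, IsCircle A k u f ∧ circleSign A k u f = -1) ∧
        F.card = d ∧
        (∀ i j : Fin d, Relation.ReflTransGen
          (fun u v => u ≠ v ∧ ∃ e ∈ F, A u e ≠ 0 ∧ A v e ≠ 0) i j) ∧
        N ⊆ F ∧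
        (∃ k u f, IsCircle A k u f ∧ (∀ s < k, f s ∈ F) ∧
          circleSign A k u f = -1 ∧ (Finset.range k).image f = N) ∧
        (∀ k u f, IsCircle A k u f → (∀ s < k, f s ∈ F) →
          (Finset.range k).image f = N)) →
      (Function.Surjective (fun (x : E → ℤ) =>
          ((fun i : Fin t => ∑ e, a i e * x e, ((∑ e ∈ N, x e : ℤ) : ZMod 2)) :
            (Fin t → ℤ) × ZMod 2)) ∧
        ∀ x : E → ℤ,
          ((∀ i, ∑ e, a i e * x e = 0) ∧ ((∑ e ∈ N, x e : ℤ) : ZMod 2) = 0) ↔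
          ∃ y : Fin d → ℤ, x = Aᵀ.mulVec y)) :=
  weights_exact_sequence_general d E A hA F t ε hεinj hεrange a hker hprim hsupp hpos N
end

section
/- Let G be a finite connected simple graph with vertex set V and edge set E, and let M ∈ ℤ^{V×E} be its unsigned incidence matrix, i.e. M(v,e) = 1 if v is an endpoint of e and M(v,e) = 0 otherwise. Let 𝟙 ∈ ℤ^E be the all-ones vector. Then: (a) 𝟙 lies in M^T ℚ^V (the rational row space of M); (b) 𝟙 lies in M^T ℤ^V (i.e. 𝟙 = M^T y for some y ∈ ℤ^V) if and only if G is bipartite. (These are precisely the statements that the toric ring R_{P_G} of the signed poset P_G = {χ_u + χ_v : {u,v} ∈ E(G)} is always ℚ-Gorenstein, and is Gorenstein if and only if G is bipartite.) -/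
lemma sum_ite_mem_pair {V R : Type*} [Fintype V] [DecidableEq V] [CommRing R]
    {u w : V} (h : u ≠ w) (y : V → R) :
    ∑ v, (if v ∈ (s(u,w) : Sym2 V) then (1:R) else 0) * y v = y u + y w := by
  have : ∀ v : V, (if v ∈ (s(u,w) : Sym2 V) then (1:R) else 0) * y v
      = (if v = u then y v else 0) + (if v = w then y v else 0) := by
    intro v
    by_cases hu : v = u <;> by_cases hw : v = w <;>
      simp_all [Sym2.mem_iff]
  rw [Finset.sum_congr rfl (fun v _ => this v), Finset.sum_add_distrib]
  simp

/-- For a finite connected simple graph `G` with unsigned incidence matrix `M`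
(rows: vertices, columns: edges, entry `1` iff the vertex lies on the edge), the
all-ones vector `𝟙 ∈ ℤ^E` always lies in the rational row space `M^T ℚ^V`, and it
lies in the integral row space `M^T ℤ^V` if and only if `G` is bipartite.
(These are the ℚ-Gorenstein and Gorenstein criteria for the toric ring `R_{P_G}`.) -/
theorem incidence_all_ones_row_space
    {V : Type*} [Fintype V] [DecidableEq V]
    (G : SimpleGraph V) (hconn : G.Connected)
    (M : Matrix V G.edgeSet ℤ)
    (hM : ∀ (v : V) (e : G.edgeSet), M v e = if v ∈ (e : Sym2 V) then 1 else 0) :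
    (∃ y : V → ℚ, ∀ e : G.edgeSet, ∑ v, (M v e : ℚ) * y v = 1) ∧
    ((∃ y : V → ℤ, ∀ e : G.edgeSet, ∑ v, M v e * y v = 1) ↔
      ∃ f : V → Bool, ∀ ⦃u w : V⦄, G.Adj u w → f u ≠ f w) := by
  -- general computation of the sum for a rational/integer weighting
  have keyQ : ∀ (y : V → ℚ) (e : G.edgeSet), ∃ u w : V, G.Adj u w ∧
      (e : Sym2 V) = s(u,w) ∧ ∑ v, (M v e : ℚ) * y v = y u + y w := by
    intro y e
    obtain ⟨e', he⟩ := e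
    induction e' using Sym2.ind with
    | _ u w =>
      refine ⟨u, w, he, rfl, ?_⟩
      have hne : u ≠ w := (G.mem_edgeSet.mp he).ne
      rw [← sum_ite_mem_pair hne y]
      refine Finset.sum_congr rfl fun v _ => ?_
      rw [hM]
      by_cases hv : v ∈ (s(u,w) : Sym2 V) <;> simp [hv]
  have keyZ : ∀ (y : V → ℤ) (e : G.edgeSet), ∃ u w : V, G.Adj u w ∧
      (e : Sym2 V) = s(u,w) ∧ ∑ v, M v e * y v = y u + y w := by
    intro y e
    obtain ⟨e', he⟩ := e
    induction e' using Sym2.ind with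
    | _ u w =>
      refine ⟨u, w, he, rfl, ?_⟩
      have hne : u ≠ w := (G.mem_edgeSet.mp he).ne
      rw [← sum_ite_mem_pair hne y]
      refine Finset.sum_congr rfl fun v _ => ?_
      rw [hM]
  constructor
  · refine ⟨fun _ => 1/2, fun e => ?_⟩
    obtain ⟨u, w, _, _, hsum⟩ := keyQ (fun _ => 1/2) e
    rw [hsum]; norm_num
  · constructor
    · rintro ⟨y, hy⟩
      refine ⟨fun v => decide (y v % 2 = 1), fun u w hadj hEq => ?_⟩
      obtain ⟨u', w', _, hew, hsum⟩ := keyZ y ⟨s(u,w), hadj⟩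
      have h1 : y u' + y w' = 1 := by rw [← hsum]; exact hy _
      have hpair : (u = u' ∧ w = w') ∨ (u = w' ∧ w = u') := by
        have := Sym2.eq_iff.mp hew
        tauto
      have hEq' : (y u % 2 = 1) ↔ (y w % 2 = 1) := by
        simpa [decide_eq_decide] using hEq
      rcases hpair with ⟨h1', h2'⟩ | ⟨h1', h2'⟩ <;> subst h1' <;> subst h2' <;> omega
    · rintro ⟨f, hf⟩
      refine ⟨fun v => if f v then 1 else 0, fun e => ?_⟩
      obtain ⟨u, w, hadj, _, hsum⟩ := keyZ (fun v => if f v then 1 else 0) e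
      rw [hsum]
      have := hf hadj
      cases hu : f u <;> cases hw : f w <;> simp_all
end

section
/- Assume σ0 is an acyclic orientation of Γ such that for every edge e there is no σ0-directed path of length at least 2 from t_{σ0}(e) to h_{σ0}(e) (i.e. (Γ, σ0) is the Hasse diagram of a signed poset of type A). Then for every x ∈ ℝ^E the following are equivalent: (i) there exists y ∈ ℝ^V such that x − A_{σ0}^T y ∈ [0,1)^E; (ii) for every cycle C of Γ and every choice of traversal direction, −#C^↓ < Σ_{e∈C^↑} x(e) − Σ_{e∈C^↓} x(e) < #C^↑. (This is the description of the conic region W(B) for toric rings of balanced signed posets, generalizing the known description for Hibi rings.) -/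
open Matrix

/-- An orientation of a simple graph: each edge is assigned a head and a tail which
are its two endpoints. -/
structure Orient {V : Type*} (Γ : SimpleGraph V) where
  head : Γ.edgeSet → V
  tail : Γ.edgeSet → V
  consistent : ∀ e : Γ.edgeSet, s(tail e, head e) = (e : Sym2 V)

/-- The (signed) incidence matrix of an orientation: `+1` at the head, `-1` at the
tail, `0` elsewhere. -/
def incMat {V : Type*} [DecidableEq V] {Γ : SimpleGraph V} (σ : Orient Γ) :
    Matrix V Γ.edgeSet ℤ :=
  Matrix.of fun v e => if v = σ.head e then 1 else if v = σ.tail e then -1 else 0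

/-- One directed step along an edge. -/
def dstep {V : Type*} {Γ : SimpleGraph V} (σ : Orient Γ) (u v : V) : Prop :=
  ∃ e, σ.tail e = u ∧ σ.head e = v

/-- An orientation is acyclic if it has no directed cycle. -/
def OAcyclic {V : Type*} {Γ : SimpleGraph V} (σ : Orient Γ) : Prop :=
  ∀ v, ¬ Relation.TransGen (dstep σ) v v

/-- `v` is the unique source: it is the only vertex that is not the head of any edge. -/
def UniqueSource {V : Type*} {Γ : SimpleGraph V} (σ : Orient Γ) (v : V) : Prop :=
  (∀ e, σ.head e ≠ v) ∧ ∀ w, (∀ e, σ.head e ≠ w) → w = v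

/-!
Write `z e = x e - (y (head e) - y (tail e))`. Along a cycle the potential terms telescope, so
`∑_{C↑} x - ∑_{C↓} x = ∑_{C↑} z - ∑_{C↓} z`; acyclicity of `σ0` makes both `C↑` and `C↓`
nonempty, and `0 ≤ z < 1` gives the two strict bounds.

Conversely, `0 ≤ z e < 1` is a system of difference constraints `y h ≤ y t + x e`,
`y t < y h + 1 - x e`. Weight a dart along `e` by `x e` and against `e` by `1 - x e - ε`. The
lower cycle inequality, for both traversal directions, says that every cycle has positive weight
at `ε = 0`, so for a small `ε > 0` no closed walk has negative weight, and the least weight of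
a walk ending at `v` is a potential `y v` satisfying all constraints.
-/

open Finset Filter Topology

lemma List.sum_map_eq_sum_range {α M : Type*} [AddCommMonoid M] (l : List α) (f : α → M)
    (g : ℕ → M) (hg : ∀ s (hs : s < l.length), g s = f l[s]) :
    (l.map f).sum = ∑ s ∈ Finset.range l.length, g s := by
  rw [Finset.sum_range, ← Fin.sum_univ_fun_getElem]
  exact Fintype.sum_congr _ _ fun s => (hg s s.2).symm

lemma Relation.transGen_of_cyclic_chain {α : Type*} {r : α → α → Prop} {ℓ : ℕ} {i : ℕ → α}
    (hℓ : 0 < ℓ) (h : ∀ s < ℓ, r (i s) (i ((s + 1) % ℓ))) :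
    Relation.TransGen r (i 0) (i 0) := by
  have hstep : ∀ n, Relation.TransGen r (i (n % ℓ)) (i ((n + 1) % ℓ)) := fun n => by
    rw [← Nat.mod_add_mod]
    exact .single (h (n % ℓ) (Nat.mod_lt n hℓ))
  simpa using
    Nat.rel_of_forall_rel_succ_of_lt (Relation.TransGen r) (f := fun n => i (n % ℓ)) hstep hℓ

lemma Finset.sum_range_sub_mod {M : Type*} [AddCommGroup M] (ℓ : ℕ) (g : ℕ → M) :
    ∑ s ∈ range ℓ, (g ((s + 1) % ℓ) - g s) = 0 := by
  have htel := sum_range_sub (fun s => g (s % ℓ)) ℓ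
  rw [Nat.mod_self, Nat.zero_mod, sub_self] at htel
  rw [← htel]
  refine sum_congr rfl fun s hs => ?_
  rw [Nat.mod_eq_of_lt (mem_range.mp hs)]

lemma exists_pos_mul_lt_of_pos {ι : Type*} [Finite ι] (a b : ι → ℝ) :
    ∃ ε > 0, ∀ i, 0 < a i → ε * b i < a i := by
  have hsmall : ∀ᶠ ε in 𝓝 (0 : ℝ), ∀ i, 0 < a i → ε * b i < a i := by
    refine eventually_all.mpr fun i => ?_
    by_cases hi : 0 < a i
    · have hlim : Tendsto (fun ε => ε * b i) (𝓝 0) (𝓝 0) :=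
        (continuous_id.mul continuous_const).tendsto' 0 0 (zero_mul _)
      exact (hlim.eventually (gt_mem_nhds hi)).mono fun _ h _ => h
    · exact .of_forall fun _ h => absurd h hi
  obtain ⟨ε, hε, hpos⟩ := ((hsmall.filter_mono nhdsWithin_le_nhds).and
    (self_mem_nhdsWithin (s := Set.Ioi (0 : ℝ)))).exists
  exact ⟨ε, hpos, hε⟩

namespace SimpleGraph

variable {V : Type*} {Γ : SimpleGraph V}

namespace Walk

def weight (f : Γ.Dart → ℝ) {u v : V} (p : Γ.Walk u v) : ℝ := (p.darts.map f).sum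

variable (f : Γ.Dart → ℝ)

@[simp]
lemma weight_nil {u : V} : (nil : Γ.Walk u u).weight f = 0 := rfl

@[simp]
lemma weight_cons {u v w : V} (h : Γ.Adj u v) (p : Γ.Walk v w) :
    (cons h p).weight f = f ⟨(u, v), h⟩ + p.weight f := by
  simp [weight]

@[simp]
lemma weight_append {u v w : V} (p : Γ.Walk u v) (q : Γ.Walk v w) :
    (p.append q).weight f = p.weight f + q.weight f := by
  simp [weight]

@[simp]
lemma weight_concat {u v w : V} (p : Γ.Walk u v) (h : Γ.Adj v w) :
    (p.concat h).weight f = p.weight f + f ⟨(v, w), h⟩ := by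
  simp [weight]

variable {f}

lemma weight_cons_nonneg_of_isPath
    (hcycle : ∀ u (c : Γ.Walk u u), c.IsCycle → 0 ≤ c.weight f)
    (hback : ∀ d, 0 ≤ f d + f d.symm) {u v : V} (h : Γ.Adj u v) {p : Γ.Walk v u}
    (hp : p.IsPath) : 0 ≤ (cons h p).weight f := by
  by_cases he : s(u, v) ∈ p.edges
  · -- a path `v ⟶ u` through the edge `uv` is that edge alone
    cases p with
    | nil => exact absurd h Γ.irrefl
    | @cons _ w _ h' q =>
      obtain rfl : u = w := by
        rw [edges_cons, List.mem_cons] at he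
        rcases he with he | he
        · rw [Sym2.eq_iff] at he
          rcases he with ⟨rfl, -⟩ | ⟨rfl, -⟩
          · exact absurd h Γ.irrefl
          · rfl
        · exact absurd (q.snd_mem_support_of_mem_edges he) ((cons_isPath_iff h' q).mp hp).2
      obtain rfl : q = nil := (isPath_iff_nil.mp ((cons_isPath_iff h' q).mp hp).1).eq_nil
      simpa [add_assoc] using hback ⟨(u, v), h⟩
  · exact hcycle u _ ((cons_isCycle_iff p h).mpr ⟨hp, he⟩)

lemma weight_bypass_le [DecidableEq V]
    (hcycle : ∀ u (c : Γ.Walk u u), c.IsCycle → 0 ≤ c.weight f)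
    (hback : ∀ d, 0 ≤ f d + f d.symm) {u v : V} (p : Γ.Walk u v) :
    p.bypass.weight f ≤ p.weight f := by
  induction p with
  | nil => rfl
  | cons h p ih =>
    rw [bypass]
    split_ifs with hs
    · have hloop := weight_cons_nonneg_of_isPath hcycle hback h (p.bypass_isPath.takeUntil hs)
      rw [← take_spec p.bypass hs, weight_append] at ih
      rw [weight_cons] at hloop ⊢
      linarith
    · rw [weight_cons, weight_cons]
      linarith

lemma weight_nonneg_of_isClosed
    (hcycle : ∀ u (c : Γ.Walk u u), c.IsCycle → 0 ≤ c.weight f)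
    (hback : ∀ d, 0 ≤ f d + f d.symm) {u : V} (c : Γ.Walk u u) : 0 ≤ c.weight f := by
  classical
  simpa [(isPath_iff_nil.mp c.bypass_isPath).eq_nil] using weight_bypass_le hcycle hback c

end Walk

lemma exists_potential_of_weight_nonneg [Finite V] {f : Γ.Dart → ℝ}
    (hclosed : ∀ u (c : Γ.Walk u u), 0 ≤ c.weight f) :
    ∃ y : V → ℝ, ∀ d : Γ.Dart, y d.snd ≤ y d.fst + f d := by
  classical
  -- every walk `u ⟶ v` is bounded below by minus the weight of a fixed walk `v ⟶ u`
  let back : V × V → ℝ := fun uv => if h : Γ.Reachable uv.2 uv.1 then h.some.weight f else 0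
  obtain ⟨M, hM⟩ := (Set.finite_range back).bddAbove
  have hbdd : ∀ v, BddBelow (Set.range fun p : Σ u, Γ.Walk u v => p.2.weight f) := by
    refine fun v => ⟨-M, ?_⟩
    rintro _ ⟨⟨u, p⟩, rfl⟩
    have hr : Γ.Reachable v u := ⟨p.reverse⟩
    have hback : back (u, v) ≤ M := hM ⟨(u, v), rfl⟩
    have hloop := hclosed u (p.append hr.some)
    simp only [back, dif_pos hr] at hback
    rw [Walk.weight_append] at hloop
    dsimp only
    linarith
  refine ⟨fun v => ⨅ p : Σ u, Γ.Walk u v, p.2.weight f, fun d => ?_⟩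
  have : Nonempty (Σ u, Γ.Walk u d.fst) := ⟨⟨_, Walk.nil⟩⟩
  rw [← sub_le_iff_le_add]
  refine le_ciInf fun ⟨u, p⟩ => ?_
  have := ciInf_le (hbdd d.snd) ⟨u, p.concat d.adj⟩
  rw [Walk.weight_concat] at this
  dsimp only at this ⊢
  linarith

end SimpleGraph

def IsClosedWalkSeq {V : Type*} {Γ : SimpleGraph V} (ℓ : ℕ) (i : ℕ → V) (c : ℕ → Γ.edgeSet) :
    Prop :=
  ∀ s < ℓ, (c s : Sym2 V) = s(i s, i ((s + 1) % ℓ))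

namespace Orient

variable {V : Type*} {Γ : SimpleGraph V} (σ : Orient Γ)

lemma head_ne_tail (e : Γ.edgeSet) : σ.head e ≠ σ.tail e := fun h => by
  simpa [← σ.consistent e, h] using e.2

lemma head_tail_of_edge_eq {e : Γ.edgeSet} {u v : V} (h : (e : Sym2 V) = s(u, v)) :
    σ.head e = v ∧ σ.tail e = u ∨ σ.head e = u ∧ σ.tail e = v := by
  have hc := σ.consistent e
  rw [h, Sym2.eq_iff] at hc
  tauto

lemma head_eq_iff_ne_of_edge_eq {e : Γ.edgeSet} {u v : V} (h : (e : Sym2 V) = s(u, v)) :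
    σ.head e = u ↔ σ.head e ≠ v := by
  have := σ.head_ne_tail e
  rcases σ.head_tail_of_edge_eq h with ⟨hh, ht⟩ | ⟨hh, ht⟩ <;> grind

lemma tail_eq_of_head_eq_right {e : Γ.edgeSet} {u v : V} (h : (e : Sym2 V) = s(u, v))
    (hv : σ.head e = v) : σ.tail e = u := by
  have := σ.head_ne_tail e
  rcases σ.head_tail_of_edge_eq h with ⟨hh, ht⟩ | ⟨hh, ht⟩ <;> grind

lemma tail_eq_of_head_eq_left {e : Γ.edgeSet} {u v : V} (h : (e : Sym2 V) = s(u, v))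
    (hu : σ.head e = u) : σ.tail e = v := by
  have := σ.head_ne_tail e
  rcases σ.head_tail_of_edge_eq h with ⟨hh, ht⟩ | ⟨hh, ht⟩ <;> grind

lemma sum_incMat_mul [Fintype V] [DecidableEq V] (e : Γ.edgeSet) (y : V → ℝ) :
    ∑ v, (incMat σ v e : ℝ) * y v = y (σ.head e) - y (σ.tail e) := by
  simp [incMat, apply_ite (Int.cast : ℤ → ℝ), ite_mul, Finset.sum_ite, Finset.filter_ne',
    Finset.filter_eq', (σ.head_ne_tail e).symm, sub_eq_add_neg]

section Cycles

variable [DecidableEq V]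

variable (ℓ : ℕ) (i : ℕ → V) (c : ℕ → Γ.edgeSet)

/-- The sets `C^↑` and `C^↓` of the traversal `i 0, i 1, …, i (ℓ - 1), i 0` along the edges
`c 0, …, c (ℓ - 1)`, as sets of step indices. -/
def cycleUp : Finset ℕ := (range ℓ).filter fun s => σ.head (c s) = i ((s + 1) % ℓ)

def cycleDown : Finset ℕ := (range ℓ).filter fun s => σ.head (c s) = i s

variable {σ ℓ i c}

lemma cycleDown_eq_filter_not (hedge : IsClosedWalkSeq ℓ i c) :
    σ.cycleDown ℓ i c = (range ℓ).filter fun s => ¬ σ.head (c s) = i ((s + 1) % ℓ) :=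
  filter_congr fun s hs => σ.head_eq_iff_ne_of_edge_eq (hedge s (mem_range.mp hs))

lemma sum_cycleUp_add_sum_cycleDown (hedge : IsClosedWalkSeq ℓ i c) (g : ℕ → ℝ) :
    ∑ s ∈ σ.cycleUp ℓ i c, g s + ∑ s ∈ σ.cycleDown ℓ i c, g s = ∑ s ∈ range ℓ, g s := by
  rw [cycleDown_eq_filter_not hedge, cycleUp, sum_filter_add_sum_filter_not]

lemma cycleUp_nonempty (hedge : IsClosedWalkSeq ℓ i c) (hacyc : OAcyclic σ) (hℓ : 0 < ℓ) :
    (σ.cycleUp ℓ i c).Nonempty := by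
  by_contra hempty
  refine hacyc (i 0) <| Relation.transGen_swap.mp <|
    Relation.transGen_of_cyclic_chain hℓ fun s hs => ?_
  have hup : ¬ σ.head (c s) = i ((s + 1) % ℓ) := fun hup =>
    hempty ⟨s, mem_filter.mpr ⟨mem_range.mpr hs, hup⟩⟩
  have hdown := (σ.head_eq_iff_ne_of_edge_eq (hedge s hs)).mpr hup
  exact ⟨c s, σ.tail_eq_of_head_eq_left (hedge s hs) hdown, hdown⟩

lemma cycleDown_nonempty (hedge : IsClosedWalkSeq ℓ i c) (hacyc : OAcyclic σ) (hℓ : 0 < ℓ) :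
    (σ.cycleDown ℓ i c).Nonempty := by
  by_contra hempty
  refine hacyc (i 0) (Relation.transGen_of_cyclic_chain hℓ fun s hs => ?_)
  have hdown : ¬ σ.head (c s) = i s := fun h =>
    hempty ⟨s, mem_filter.mpr ⟨mem_range.mpr hs, h⟩⟩
  have hup := not_not.mp (mt (σ.head_eq_iff_ne_of_edge_eq (hedge s hs)).mpr hdown)
  exact ⟨c s, σ.tail_eq_of_head_eq_right (hedge s hs) hup, hup⟩

lemma sum_cycleUp_sub_sum_cycleDown_of_potential (hedge : IsClosedWalkSeq ℓ i c)
    (x : Γ.edgeSet → ℝ) (y : V → ℝ) :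
    ∑ s ∈ σ.cycleUp ℓ i c, x (c s) - ∑ s ∈ σ.cycleDown ℓ i c, x (c s) =
      ∑ s ∈ σ.cycleUp ℓ i c, (x (c s) - (y (σ.head (c s)) - y (σ.tail (c s)))) -
        ∑ s ∈ σ.cycleDown ℓ i c, (x (c s) - (y (σ.head (c s)) - y (σ.tail (c s)))) := by
  have hup : ∑ s ∈ σ.cycleUp ℓ i c, (x (c s) - (y (σ.head (c s)) - y (σ.tail (c s)))) =
      ∑ s ∈ σ.cycleUp ℓ i c, x (c s) -
        ∑ s ∈ σ.cycleUp ℓ i c, (y (i ((s + 1) % ℓ)) - y (i s)) := by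
    rw [← sum_sub_distrib]
    refine sum_congr rfl fun s hs => ?_
    obtain ⟨hs, hhead⟩ := mem_filter.mp hs
    rw [hhead, σ.tail_eq_of_head_eq_right (hedge s (mem_range.mp hs)) hhead]
  have hdown : ∑ s ∈ σ.cycleDown ℓ i c, (x (c s) - (y (σ.head (c s)) - y (σ.tail (c s)))) =
      ∑ s ∈ σ.cycleDown ℓ i c, x (c s) +
        ∑ s ∈ σ.cycleDown ℓ i c, (y (i ((s + 1) % ℓ)) - y (i s)) := by
    rw [← sum_add_distrib]
    refine sum_congr rfl fun s hs => ?_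
    obtain ⟨hs, hhead⟩ := mem_filter.mp hs
    rw [hhead, σ.tail_eq_of_head_eq_left (hedge s (mem_range.mp hs)) hhead]
    ring
  have htel :=
    sum_cycleUp_add_sum_cycleDown (σ := σ) hedge fun s => y (i ((s + 1) % ℓ)) - y (i s)
  have hzero : ∑ s ∈ range ℓ, (y (i ((s + 1) % ℓ)) - y (i s)) = 0 :=
    sum_range_sub_mod ℓ fun s => y (i s)
  linarith

theorem cycle_ineq_of_potential (hedge : IsClosedWalkSeq ℓ i c) (hacyc : OAcyclic σ)
    (hℓ : 0 < ℓ) {x : Γ.edgeSet → ℝ} {y : V → ℝ}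
    (hy : ∀ e, x e - (y (σ.head e) - y (σ.tail e)) ∈ Set.Ico (0 : ℝ) 1) :
    -(#(σ.cycleDown ℓ i c) : ℝ) <
        ∑ s ∈ σ.cycleUp ℓ i c, x (c s) - ∑ s ∈ σ.cycleDown ℓ i c, x (c s) ∧
      ∑ s ∈ σ.cycleUp ℓ i c, x (c s) - ∑ s ∈ σ.cycleDown ℓ i c, x (c s) <
        #(σ.cycleUp ℓ i c) := by
  have hbounds : ∀ S : Finset ℕ, S.Nonempty →
      0 ≤ ∑ s ∈ S, (x (c s) - (y (σ.head (c s)) - y (σ.tail (c s)))) ∧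
        ∑ s ∈ S, (x (c s) - (y (σ.head (c s)) - y (σ.tail (c s)))) < #S := fun S hS =>
    ⟨sum_nonneg fun s _ => (hy (c s)).1,
      by simpa using sum_lt_sum_of_nonempty hS fun s _ => (hy (c s)).2⟩
  have hup := hbounds _ (cycleUp_nonempty hedge hacyc hℓ)
  have hdown := hbounds _ (cycleDown_nonempty hedge hacyc hℓ)
  rw [sum_cycleUp_sub_sum_cycleDown_of_potential hedge]
  constructor <;> linarith

lemma sum_range_ite_eq (hedge : IsClosedWalkSeq ℓ i c) (x : Γ.edgeSet → ℝ) (ε : ℝ) :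
    ∑ s ∈ range ℓ, (if σ.head (c s) = i ((s + 1) % ℓ) then x (c s) else 1 - x (c s) - ε) =
      ∑ s ∈ σ.cycleUp ℓ i c, x (c s) - ∑ s ∈ σ.cycleDown ℓ i c, x (c s) +
        #(σ.cycleDown ℓ i c) * (1 - ε) := by
  rw [← sum_cycleUp_add_sum_cycleDown (σ := σ) hedge, cycleDown_eq_filter_not hedge, cycleUp,
    sum_congr rfl fun s hs => if_pos (mem_filter.mp hs).2,
    sum_congr rfl fun s hs => if_neg (mem_filter.mp hs).2]
  simp only [sum_sub_distrib, sum_const, nsmul_eq_mul]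
  ring

end Cycles

def dart (e : Γ.edgeSet) : Γ.Dart :=
  ⟨(σ.tail e, σ.head e), Γ.mem_edgeSet.mp (σ.consistent e ▸ e.2)⟩

@[simp]
lemma edge_dart (e : Γ.edgeSet) : (σ.dart e).edge = e := σ.consistent e

variable [DecidableEq V]

noncomputable def dartWeight (x : Γ.edgeSet → ℝ) (ε : ℝ) (d : Γ.Dart) : ℝ :=
  if σ.head ⟨d.edge, d.edge_mem⟩ = d.snd then x ⟨d.edge, d.edge_mem⟩
  else 1 - x ⟨d.edge, d.edge_mem⟩ - ε

variable (x : Γ.edgeSet → ℝ) (ε : ℝ)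

lemma dartWeight_dart (e : Γ.edgeSet) : σ.dartWeight x ε (σ.dart e) = x e := by
  have he : (⟨(σ.dart e).edge, (σ.dart e).edge_mem⟩ : Γ.edgeSet) = e :=
    Subtype.ext (σ.edge_dart e)
  rw [dartWeight, he]
  exact if_pos rfl

lemma dartWeight_dart_symm (e : Γ.edgeSet) :
    σ.dartWeight x ε (σ.dart e).symm = 1 - x e - ε := by
  have he : (⟨(σ.dart e).symm.edge, (σ.dart e).symm.edge_mem⟩ : Γ.edgeSet) = e :=
    Subtype.ext ((σ.dart e).edge_symm.trans (σ.edge_dart e))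
  rw [dartWeight, he]
  exact if_neg (σ.head_ne_tail e)

lemma dartWeight_add_dartWeight_symm (d : Γ.Dart) :
    σ.dartWeight x ε d + σ.dartWeight x ε d.symm = 1 - ε := by
  set e : Γ.edgeSet := ⟨d.edge, d.edge_mem⟩
  have he : (⟨d.symm.edge, d.symm.edge_mem⟩ : Γ.edgeSet) = e := Subtype.ext d.edge_symm
  have key := σ.head_eq_iff_ne_of_edge_eq (e := e) (u := d.fst) (v := d.snd) rfl
  rw [dartWeight, dartWeight, he]
  change (if σ.head e = d.snd then _ else _) + (if σ.head e = d.fst then _ else _) = _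
  by_cases h : σ.head e = d.snd
  · rw [if_pos h, if_neg fun h' => key.mp h' h]
    ring
  · rw [if_neg h, if_pos (key.mpr h)]
    ring

lemma weight_dartWeight_zero_sub_le {u v : V} (hε : 0 ≤ ε) (p : Γ.Walk u v) :
    p.weight (σ.dartWeight x 0) - ε * p.length ≤ p.weight (σ.dartWeight x ε) := by
  induction p with
  | nil => simp
  | cons h p ih =>
    simp only [SimpleGraph.Walk.weight_cons, SimpleGraph.Walk.length_cons, dartWeight]
    push_cast
    split_ifs <;> linarith

lemma exists_closedWalkSeq_weight_eq_of_isCycle {u : V} {C : Γ.Walk u u} (hC : C.IsCycle) :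
    ∃ (i : ℕ → V) (c : ℕ → Γ.edgeSet),
      (∀ s s', s < C.length → s' < C.length → i s = i s' → s = s') ∧
      IsClosedWalkSeq C.length i c ∧
      C.weight (σ.dartWeight x ε) =
        ∑ s ∈ σ.cycleUp C.length i c, x (c s) - ∑ s ∈ σ.cycleDown C.length i c, x (c s) +
          #(σ.cycleDown C.length i c) * (1 - ε) := by
  set ℓ := C.length
  have hℓ : 0 < ℓ := by have := hC.three_le_length; omega
  have hvert : ∀ s < ℓ, C.getVert (s + 1) = C.getVert ((s + 1) % ℓ) := by
    intro s hs
    rcases Nat.lt_or_ge (s + 1) ℓ with h | h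
    · rw [Nat.mod_eq_of_lt h]
    · rw [show s + 1 = ℓ by omega, Nat.mod_self, C.getVert_length, C.getVert_zero]
  let c : ℕ → Γ.edgeSet := fun s =>
    ⟨s(C.getVert (s % ℓ), C.getVert (s % ℓ + 1)), C.adj_getVert_succ (Nat.mod_lt s hℓ)⟩
  have hedge : IsClosedWalkSeq ℓ C.getVert c := by
    intro s hs
    simp only [c, Nat.mod_eq_of_lt hs, hvert s hs]
  refine ⟨C.getVert, c,
    fun s s' hs hs' h => hC.getVert_injOn' (by simp; omega) (by simp; omega) h, hedge, ?_⟩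
  rw [← sum_range_ite_eq hedge, SimpleGraph.Walk.weight,
    List.sum_map_eq_sum_range _ _ _ fun s hs => ?_, C.length_darts]
  have hsℓ : s < ℓ := by simpa [ℓ] using hs
  rw [SimpleGraph.Walk.darts_getElem_eq_getVert]
  simp only [c, dartWeight, Nat.mod_eq_of_lt hsℓ, hvert s hsℓ]
  rfl

variable {σ x}

theorem exists_potential_of_cycle_ineq [Fintype V]
    (hcyc : ∀ (ℓ : ℕ) (i : ℕ → V) (c : ℕ → Γ.edgeSet), 3 ≤ ℓ →
      (∀ s s', s < ℓ → s' < ℓ → i s = i s' → s = s') →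
      IsClosedWalkSeq ℓ i c →
      -(#(σ.cycleDown ℓ i c) : ℝ) <
        ∑ s ∈ σ.cycleUp ℓ i c, x (c s) - ∑ s ∈ σ.cycleDown ℓ i c, x (c s)) :
    ∃ y : V → ℝ, ∀ e, x e - (y (σ.head e) - y (σ.tail e)) ∈ Set.Ico (0 : ℝ) 1 := by
  classical
  have hpos : ∀ u (C : Γ.Walk u u), C.IsCycle → 0 < C.weight (σ.dartWeight x 0) := by
    intro u C hC
    obtain ⟨i, c, hinj, hedge, hweight⟩ := σ.exists_closedWalkSeq_weight_eq_of_isCycle x 0 hC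
    have := hcyc _ i c hC.three_le_length hinj hedge
    rw [hweight]
    linarith
  obtain ⟨ε₀, hε₀, hsmall⟩ := exists_pos_mul_lt_of_pos
    (fun S : Finset Γ.Dart => ∑ d ∈ S, σ.dartWeight x 0 d) (fun S => #S)
  set ε := min ε₀ 1
  have hcycle : ∀ u (C : Γ.Walk u u), C.IsCycle → 0 ≤ C.weight (σ.dartWeight x ε) := by
    intro u C hC
    -- the darts of a cycle are distinct, so `hsmall` applies to the finset of them
    have hnodup : C.darts.Nodup := hC.edges_nodup.of_map _
    have hlt : ε₀ * C.length < C.weight (σ.dartWeight x 0) := by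
      have := hsmall C.darts.toFinset
      rw [List.sum_toFinset _ hnodup, List.toFinset_card_of_nodup hnodup, C.length_darts] at this
      exact this (hpos u C hC)
    have hle := σ.weight_dartWeight_zero_sub_le x ε (by positivity) C
    have : ε * C.length ≤ ε₀ * C.length := by gcongr; exact min_le_left _ _
    linarith
  obtain ⟨y, hy⟩ := SimpleGraph.exists_potential_of_weight_nonneg
    fun _ => SimpleGraph.Walk.weight_nonneg_of_isClosed hcycle fun d => by
      rw [dartWeight_add_dartWeight_symm]
      linarith [min_le_right ε₀ 1]
  refine ⟨y, fun e => ⟨?_, ?_⟩⟩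
  · have := hy (σ.dart e)
    rw [dartWeight_dart] at this
    change y (σ.head e) ≤ y (σ.tail e) + x e at this
    linarith
  · have := hy (σ.dart e).symm
    rw [dartWeight_dart_symm] at this
    change y (σ.tail e) ≤ y (σ.head e) + (1 - x e - ε) at this
    linarith [lt_min hε₀ one_pos]

end Orient

theorem conic_region_of_balanced_signed_poset_general
    {V : Type*} [Fintype V] [DecidableEq V] (Γ : SimpleGraph V)
    (σ0 : Orient Γ) (hacyc : OAcyclic σ0)
    (x : Γ.edgeSet → ℝ) :
    (∃ y : V → ℝ, ∀ e, x e - ∑ v, (incMat σ0 v e : ℝ) * y v ∈ Set.Ico (0:ℝ) 1) ↔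
    (∀ (ℓ : ℕ) (i : ℕ → V) (c : ℕ → Γ.edgeSet), 3 ≤ ℓ →
      (∀ s s', s < ℓ → s' < ℓ → i s = i s' → s = s') →
      (∀ s < ℓ, (c s : Sym2 V) = s(i s, i ((s + 1) % ℓ))) →
      (-((((Finset.range ℓ).filter fun s => σ0.head (c s) = i s).card : ℝ)) <
          (∑ s ∈ (Finset.range ℓ).filter (fun s => σ0.head (c s) = i ((s + 1) % ℓ)),
            x (c s)) -
          (∑ s ∈ (Finset.range ℓ).filter (fun s => σ0.head (c s) = i s), x (c s)) ∧
        (∑ s ∈ (Finset.range ℓ).filter (fun s => σ0.head (c s) = i ((s + 1) % ℓ)),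
            x (c s)) -
          (∑ s ∈ (Finset.range ℓ).filter (fun s => σ0.head (c s) = i s), x (c s)) <
          (((Finset.range ℓ).filter fun s => σ0.head (c s) = i ((s + 1) % ℓ)).card : ℝ))) := by
  simp only [σ0.sum_incMat_mul]
  constructor
  · rintro ⟨y, hy⟩ ℓ i c hℓ _ hedge
    exact Orient.cycle_ineq_of_potential hedge hacyc (by omega) hy
  · intro hcyc
    exact Orient.exists_potential_of_cycle_ineq fun ℓ i c hℓ hinj hedge =>
      (hcyc ℓ i c hℓ hinj hedge).1

/-- Description of the conic region `W(B)` for the toric ring of a balanced signed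
poset of type `A` with Hasse diagram `(Γ, σ0)`. -/
theorem conic_region_of_balanced_signed_poset
    {V : Type*} [Fintype V] [DecidableEq V] (Γ : SimpleGraph V)
    (hconn : Γ.Connected)
    (σ0 : Orient Γ) (hacyc : OAcyclic σ0)
    (hhasse : ∀ e, ¬ ∃ w, dstep σ0 (σ0.tail e) w ∧
      Relation.TransGen (dstep σ0) w (σ0.head e))
    (x : Γ.edgeSet → ℝ) :
    (∃ y : V → ℝ, ∀ e, x e - ∑ v, (incMat σ0 v e : ℝ) * y v ∈ Set.Ico (0:ℝ) 1) ↔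
    (∀ (ℓ : ℕ) (i : ℕ → V) (c : ℕ → Γ.edgeSet), 3 ≤ ℓ →
      (∀ s s', s < ℓ → s' < ℓ → i s = i s' → s = s') →
      (∀ s < ℓ, (c s : Sym2 V) = s(i s, i ((s + 1) % ℓ))) →
      (-((((Finset.range ℓ).filter fun s => σ0.head (c s) = i s).card : ℝ)) <
          (∑ s ∈ (Finset.range ℓ).filter (fun s => σ0.head (c s) = i ((s + 1) % ℓ)),
            x (c s)) -
          (∑ s ∈ (Finset.range ℓ).filter (fun s => σ0.head (c s) = i s), x (c s)) ∧
        (∑ s ∈ (Finset.range ℓ).filter (fun s => σ0.head (c s) = i ((s + 1) % ℓ)),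
            x (c s)) -
          (∑ s ∈ (Finset.range ℓ).filter (fun s => σ0.head (c s) = i s), x (c s)) <
          (((Finset.range ℓ).filter fun s => σ0.head (c s) = i ((s + 1) % ℓ)).card : ℝ))) :=
  conic_region_of_balanced_signed_poset_general Γ σ0 hacyc x
end

section
/- Assume σ0 is an acyclic orientation of Γ such that for every edge e there is no σ0-directed path of length at least 2 from t_{σ0}(e) to h_{σ0}(e) (i.e. (Γ, σ0) is the Hasse diagram of a signed poset of type A), and fix a vertex v ∈ V. Then the map σ ↦ χ_{E(σ,σ0)} + A_{σ0}^T ℤ^V is a bijection from the set of acyclic orientations of Γ having v as their unique source onto the set of cosets α ∈ ℤ^E / A_{σ0}^T ℤ^V that contain an element of [0,1)^E + A_{σ0}^T ℝ^V. (This gives the bijection between isomorphism classes of conic divisorial ideals of the toric ring of a balanced signed poset, the lattice points of W(B), and acyclic orientations of Γ with a chosen unique source.) -/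
open Matrix

set_option linter.unusedSectionVars false

section Aux

open Relation

variable {V : Type*} [DecidableEq V] {Γ : SimpleGraph V}

lemma head_ne_tail (σ : Orient Γ) (e : Γ.edgeSet) : σ.head e ≠ σ.tail e := by
  intro h
  have hc := σ.consistent e
  have hd : ¬ (e : Sym2 V).IsDiag := Γ.not_isDiag_of_mem_edgeSet e.2
  rw [← hc] at hd
  exact hd (Sym2.mk_isDiag_iff.mpr h.symm)

lemma orient_cases (σ σ0 : Orient Γ) (e : Γ.edgeSet) :
    (σ.head e = σ0.head e ∧ σ.tail e = σ0.tail e) ∨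
    (σ.head e = σ0.tail e ∧ σ.tail e = σ0.head e) := by
  have h := (σ.consistent e).trans (σ0.consistent e).symm
  rcases Sym2.eq_iff.mp h with ⟨h1, h2⟩ | ⟨h1, h2⟩
  · exact Or.inl ⟨h2, h1⟩
  · exact Or.inr ⟨h2, h1⟩

lemma orient_ext {σ σ' : Orient Γ} (h : ∀ e, σ.head e = σ'.head e) : σ = σ' := by
  have ht : ∀ e, σ.tail e = σ'.tail e := by
    intro e
    rcases orient_cases σ σ' e with ⟨_, h2⟩ | ⟨h1, _⟩
    · exact h2
    · exact absurd ((h e).symm.trans h1) (head_ne_tail σ' e)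
  have H1 : σ.head = σ'.head := funext h
  have H2 : σ.tail = σ'.tail := funext ht
  cases σ; cases σ'
  cases H1; cases H2; rfl

variable [Fintype V]

lemma sum_if_pair {R : Type*} [Ring R] {h t : V} (hne : h ≠ t) (y : V → R) :
    ∑ w, (if w = h then (1 : R) else if w = t then -1 else 0) * y w = y h - y t := by
  have key : ∀ w, (if w = h then (1 : R) else if w = t then -1 else 0) * y w
      = (if w = h then y w else 0) + (if w = t then -(y w) else 0) := by
    intro w
    by_cases h1 : w = h
    · subst h1; simp [hne]
    · by_cases h2 : w = t
      · subst h2; simp [h1, Ne.symm hne]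
      · simp [h1, h2]
  simp only [key, Finset.sum_add_distrib, Finset.sum_ite_eq', Finset.mem_univ, if_true]
  rw [sub_eq_add_neg]

lemma incMat_mulVec (σ : Orient Γ) (z : V → ℤ) (e : Γ.edgeSet) :
    (incMat σ)ᵀ.mulVec z e = z (σ.head e) - z (σ.tail e) := by
  have hne := head_ne_tail σ e
  simp only [Matrix.mulVec, dotProduct, Matrix.transpose_apply, incMat, Matrix.of_apply]
  exact sum_if_pair hne z

lemma incMat_sum_real (σ : Orient Γ) (y : V → ℝ) (e : Γ.edgeSet) :
    ∑ w, (incMat σ w e : ℝ) * y w = y (σ.head e) - y (σ.tail e) := by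
  have hne := head_ne_tail σ e
  have : ∀ w, ((incMat σ w e : ℤ) : ℝ) = if w = σ.head e then (1:ℝ) else if w = σ.tail e then -1 else 0 := by
    intro w
    simp [incMat, apply_ite (fun z : ℤ => (z : ℝ))]
  simp only [this]
  exact sum_if_pair hne y

end Aux
section Aux2

open Relation

variable {V : Type*} [DecidableEq V] {Γ : SimpleGraph V}

def chi (σ0 σ : Orient Γ) : Γ.edgeSet → ℤ := fun e => if σ.head e = σ0.head e then 1 else 0

variable [Fintype V]

noncomputable def fpred (σ : Orient Γ) (u : V) : ℕ :=
  Set.ncard {x | Relation.TransGen (dstep σ) x u}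

lemma fpred_lt {σ : Orient Γ} (hac : OAcyclic σ) {u w : V} (h : dstep σ u w) :
    fpred σ u < fpred σ w := by
  apply Set.ncard_lt_ncard ?_ (Set.toFinite _)
  constructor
  · intro x hx; exact hx.tail h
  · intro hsub
    exact hac u (hsub (Relation.TransGen.single h))

lemma fpred_le {σ : Orient Γ} (hac : OAcyclic σ) (u : V) :
    fpred σ u + 1 ≤ Fintype.card V := by
  have h1 : {x | Relation.TransGen (dstep σ) x u} ⊆ (Set.univ \ {u} : Set V) := by
    intro x hx
    refine ⟨trivial, ?_⟩
    intro hxu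
    exact hac u (by simpa [Set.mem_singleton_iff.mp hxu] using hx)
  have h2 := Set.ncard_le_ncard h1 (Set.toFinite _)
  have h3 : (Set.univ \ {u} : Set V).ncard = Fintype.card V - 1 := by
    rw [Set.ncard_diff (by simp) (Set.toFinite _)]
    simp [Set.ncard_univ]
  have h4 : 1 ≤ Fintype.card V := Fintype.card_pos_iff.mpr ⟨u⟩
  unfold fpred
  omega

lemma exists_source {σ : Orient Γ} (hac : OAcyclic σ) (T : Set V) (hT : T.Nonempty)
    (hclosed : ∀ e, σ.head e ∈ T → σ.tail e ∈ T) :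
    ∃ u ∈ T, ∀ e, σ.head e ≠ u := by
  classical
  obtain ⟨u0, hu0⟩ := hT
  obtain ⟨u, huT, hmin⟩ := Finset.exists_min_image (Finset.univ.filter (· ∈ T)) (fpred σ)
    ⟨u0, by simp [hu0]⟩
  have hu : u ∈ T := by simpa using huT
  refine ⟨u, hu, ?_⟩
  intro e he
  have ht : σ.tail e ∈ T := hclosed e (he ▸ hu)
  have h1 := hmin (σ.tail e) (by simp [ht])
  have h2 := fpred_lt hac ⟨e, rfl, he⟩
  omega

lemma chi_eq_one {σ0 σ : Orient Γ} {e : Γ.edgeSet} (h : σ.head e = σ0.head e) :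
    chi σ0 σ e = 1 := if_pos h

lemma chi_eq_zero {σ0 σ : Orient Γ} {e : Γ.edgeSet} (h : σ.head e = σ0.tail e) :
    chi σ0 σ e = 0 := by
  refine if_neg ?_
  intro h'
  exact head_ne_tail σ0 e (h'.symm.trans h)

lemma chi_nonneg (σ0 σ : Orient Γ) (e : Γ.edgeSet) : 0 ≤ chi σ0 σ e := by
  unfold chi; split <;> omega

lemma chi_le_one (σ0 σ : Orient Γ) (e : Γ.edgeSet) : chi σ0 σ e ≤ 1 := by
  unfold chi; split <;> omega

lemma inj_aux {σ0 σ σ' : Orient Γ} {v : V} (hac : OAcyclic σ) (hac' : OAcyclic σ')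
    (hus : UniqueSource σ v) (hus' : UniqueSource σ' v)
    (z : V → ℤ) (hz : ∀ e, z (σ0.head e) - z (σ0.tail e) = chi σ0 σ e - chi σ0 σ' e) :
    σ = σ' := by
  -- z weakly increases along σ and weakly decreases along σ'
  have hmono : ∀ e : Γ.edgeSet, z (σ.tail e) ≤ z (σ.head e) := by
    intro e
    rcases orient_cases σ σ0 e with ⟨h1, h2⟩ | ⟨h1, h2⟩
    · have := hz e
      have hc1 : chi σ0 σ e = 1 := chi_eq_one h1
      have hc2 := chi_le_one σ0 σ' e
      rw [h1, h2]; omega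
    · have := hz e
      have hc1 : chi σ0 σ e = 0 := chi_eq_zero h1
      have hc2 := chi_nonneg σ0 σ' e
      rw [h1, h2]; omega
  have hmono' : ∀ e : Γ.edgeSet, z (σ'.head e) ≤ z (σ'.tail e) := by
    intro e
    rcases orient_cases σ' σ0 e with ⟨h1, h2⟩ | ⟨h1, h2⟩
    · have := hz e
      have hc1 : chi σ0 σ' e = 1 := chi_eq_one h1
      have hc2 := chi_le_one σ0 σ e
      rw [h1, h2]; omega
    · have := hz e
      have hc1 : chi σ0 σ' e = 0 := chi_eq_zero h1
      have hc2 := chi_nonneg σ0 σ e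
      rw [h1, h2]; omega
  have hV : Nonempty V := ⟨v⟩
  obtain ⟨u0, -, hmin⟩ := Finset.exists_min_image Finset.univ z ⟨v, Finset.mem_univ v⟩
  obtain ⟨u1, -, hmax⟩ := Finset.exists_max_image Finset.univ z ⟨v, Finset.mem_univ v⟩
  -- min-set is closed for σ, so contains a source of σ, which must be v
  obtain ⟨uv, huvT, huvsrc⟩ := exists_source hac {w | z w ≤ z u0} ⟨u0, by simp⟩
    (fun e he => le_trans (hmono e) he)
  have huv : uv = v := hus.2 uv huvsrc
  have hzv_min : z v ≤ z u0 := huv ▸ huvT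
  obtain ⟨uw, huwT, huwsrc⟩ := exists_source hac' {w | z u1 ≤ z w} ⟨u1, by simp⟩
    (fun e he => le_trans he (hmono' e))
  have huw : uw = v := hus'.2 uw huwsrc
  have hzv_max : z u1 ≤ z v := huw ▸ huwT
  have hconst : ∀ w, z w = z v := by
    intro w
    have := hmin w (Finset.mem_univ w)
    have := hmax w (Finset.mem_univ w)
    omega
  have hchi : ∀ e, chi σ0 σ e = chi σ0 σ' e := by
    intro e
    have := hz e
    rw [hconst (σ0.head e), hconst (σ0.tail e)] at this
    omega
  apply orient_ext
  intro e
  rcases orient_cases σ σ0 e with ⟨h1, _⟩ | ⟨h1, _⟩ <;>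
    rcases orient_cases σ' σ0 e with ⟨h1', _⟩ | ⟨h1', _⟩
  · exact h1.trans h1'.symm
  · exfalso
    have := hchi e
    rw [chi_eq_one h1, chi_eq_zero h1'] at this
    omega
  · exfalso
    have := hchi e
    rw [chi_eq_zero h1, chi_eq_one h1'] at this
    omega
  · exact h1.trans h1'.symm

end Aux2
section Aux3

open Relation
open scoped Classical

variable {V : Type*} [DecidableEq V] {Γ : SimpleGraph V} [Fintype V]

lemma mapsTo_witness {σ0 σ : Orient Γ} (hac : OAcyclic σ) :
    ∃ y : V → ℝ, ∀ e : Γ.edgeSet,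
      ((chi σ0 σ e : ℤ) : ℝ) - (y (σ0.head e) - y (σ0.tail e)) ∈ Set.Ico (0:ℝ) 1 := by
  refine ⟨fun w => (fpred σ w : ℝ) / (Fintype.card V : ℝ), ?_⟩
  intro e
  have hcard : (0:ℝ) < (Fintype.card V : ℝ) := by
    exact_mod_cast Fintype.card_pos_iff.mpr ⟨σ.head e⟩
  have key : ∀ u w : V, dstep σ u w →
      (0:ℝ) < (fpred σ w : ℝ) / (Fintype.card V : ℝ) - (fpred σ u : ℝ) / (Fintype.card V : ℝ) ∧
      (fpred σ w : ℝ) / (Fintype.card V : ℝ) - (fpred σ u : ℝ) / (Fintype.card V : ℝ) < 1 := by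
    intro u w h
    have h1 := fpred_lt hac h
    have h2 := fpred_le hac w
    constructor
    · rw [div_sub_div_same]
      apply div_pos _ hcard
      have : (fpred σ u : ℝ) < (fpred σ w : ℝ) := by exact_mod_cast h1
      linarith
    · rw [div_sub_div_same, div_lt_one hcard]
      have : (fpred σ w : ℝ) < (Fintype.card V : ℝ) := by
        exact_mod_cast Nat.lt_of_lt_of_le (Nat.lt_succ_self _) h2
      have h0 : (0:ℝ) ≤ (fpred σ u : ℝ) := Nat.cast_nonneg _
      linarith
  rcases orient_cases σ σ0 e with ⟨h1, h2⟩ | ⟨h1, h2⟩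
  · have hd : dstep σ (σ0.tail e) (σ0.head e) := ⟨e, h2, h1⟩
    have := key _ _ hd
    rw [chi_eq_one h1]
    constructor
    · push_cast; linarith [this.2]
    · push_cast; linarith [this.1]
  · have hd : dstep σ (σ0.head e) (σ0.tail e) := ⟨e, h2, h1⟩
    have := key _ _ hd
    rw [chi_eq_zero h1]
    constructor
    · push_cast; linarith [this.1]
    · push_cast; linarith [this.2]

noncomputable def flipO (τ : Orient Γ) (U : Set V) : Orient Γ where
  head e := if τ.head e ∉ U ∧ τ.tail e ∈ U then τ.tail e else τ.head e
  tail e := if τ.head e ∉ U ∧ τ.tail e ∈ U then τ.head e else τ.tail e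
  consistent e := by
    by_cases h : τ.head e ∉ U ∧ τ.tail e ∈ U
    · rw [if_pos h, if_pos h, Sym2.eq_swap]; exact τ.consistent e
    · rw [if_neg h, if_neg h]; exact τ.consistent e

variable {τ : Orient Γ} {U : Set V}

lemma flip_step (hcl : ∀ e, τ.head e ∈ U → τ.tail e ∈ U) {a b : V}
    (h : dstep (flipO τ U) a b) :
    (a ∈ U ∧ b ∈ U ∧ dstep τ a b) ∨ (a ∉ U ∧ b ∉ U ∧ dstep τ a b) ∨ (a ∉ U ∧ b ∈ U) := by
  classical
  obtain ⟨e, ht, hh⟩ := h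
  by_cases hf : τ.head e ∉ U ∧ τ.tail e ∈ U
  · right; right
    simp only [flipO, if_pos hf] at ht hh
    exact ⟨ht ▸ hf.1, hh ▸ hf.2⟩
  · simp only [flipO, if_neg hf] at ht hh
    have hd : dstep τ a b := ⟨e, ht, hh⟩
    by_cases hb : b ∈ U
    · left
      exact ⟨ht ▸ hcl e (hh ▸ hb), hb, hd⟩
    · right; left
      refine ⟨?_, hb, hd⟩
      intro ha
      exact hf ⟨hh ▸ hb, ht ▸ ha⟩

lemma flip_transGen (hcl : ∀ e, τ.head e ∈ U → τ.tail e ∈ U) {a b : V}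
    (h : Relation.TransGen (dstep (flipO τ U)) a b) :
    (a ∈ U → b ∈ U ∧ Relation.TransGen (dstep τ) a b) ∧
    (b ∉ U → a ∉ U ∧ Relation.TransGen (dstep τ) a b) := by
  induction h with
  | single h =>
    rcases flip_step hcl h with ⟨ha, hb, hd⟩ | ⟨ha, hb, hd⟩ | ⟨ha, hb⟩
    · exact ⟨fun _ => ⟨hb, .single hd⟩, fun hb' => absurd hb hb'⟩
    · exact ⟨fun ha' => absurd ha' ha, fun _ => ⟨ha, .single hd⟩⟩
    · exact ⟨fun ha' => absurd ha' ha, fun hb' => absurd hb hb'⟩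
  | tail hab hbc ih =>
    constructor
    · intro ha
      obtain ⟨hb, tab⟩ := ih.1 ha
      rcases flip_step hcl hbc with ⟨_, hc, hd⟩ | ⟨hb', _, _⟩ | ⟨hb', _⟩
      · exact ⟨hc, tab.tail hd⟩
      · exact absurd hb hb'
      · exact absurd hb hb'
    · intro hc
      rcases flip_step hcl hbc with ⟨_, hc', _⟩ | ⟨hb', _, hd⟩ | ⟨_, hc'⟩
      · exact absurd hc' hc
      · obtain ⟨ha, tab⟩ := ih.2 hb'
        exact ⟨ha, tab.tail hd⟩
      · exact absurd hc' hc

lemma flip_acyclic (hac : OAcyclic τ) (hcl : ∀ e, τ.head e ∈ U → τ.tail e ∈ U) :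
    OAcyclic (flipO τ U) := by
  intro a h
  by_cases ha : a ∈ U
  · exact hac a ((flip_transGen hcl h).1 ha).2
  · exact hac a ((flip_transGen hcl h).2 ha).2

lemma flip_chi (σ0 : Orient Γ) (hcl : ∀ e, τ.head e ∈ U → τ.tail e ∈ U) (e : Γ.edgeSet) :
    chi σ0 (flipO τ U) e = chi σ0 τ e +
      ((if σ0.head e ∈ U then (1:ℤ) else 0) - (if σ0.tail e ∈ U then (1:ℤ) else 0)) := by
  classical
  by_cases hf : τ.head e ∉ U ∧ τ.tail e ∈ U
  · have hh : (flipO τ U).head e = τ.tail e := by simp only [flipO, if_pos hf]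
    rcases orient_cases τ σ0 e with ⟨h1, h2⟩ | ⟨h1, h2⟩
    · -- τ.head = σ0.head ∉ U, τ.tail = σ0.tail ∈ U
      rw [chi_eq_zero (hh.trans h2), chi_eq_one h1]
      rw [if_neg (h1 ▸ hf.1), if_pos (h2 ▸ hf.2)]
      ring
    · -- τ.head = σ0.tail ∉ U, τ.tail = σ0.head ∈ U
      rw [chi_eq_one (hh.trans h2), chi_eq_zero h1]
      rw [if_pos (h2 ▸ hf.2), if_neg (h1 ▸ hf.1)]
      ring
  · have hh : (flipO τ U).head e = τ.head e := by simp only [flipO, if_neg hf]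
    have hsame : (σ0.head e ∈ U) ↔ (σ0.tail e ∈ U) := by
      have hor : τ.head e ∈ U ∨ τ.tail e ∉ U := by tauto
      rcases orient_cases τ σ0 e with ⟨h1, h2⟩ | ⟨h1, h2⟩
      · rw [← h1, ← h2]
        rcases hor with h | h
        · simp [h, hcl e h]
        · have : τ.head e ∉ U := fun hc => h (hcl e hc)
          simp [h, this]
      · rw [← h2, ← h1]
        rcases hor with h | h
        · simp [h, hcl e h]
        · have : τ.head e ∉ U := fun hc => h (hcl e hc)
          simp [h, this]
    have : chi σ0 (flipO τ U) e = chi σ0 τ e := by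
      unfold chi; rw [hh]
    rw [this]
    by_cases h : σ0.head e ∈ U
    · rw [if_pos h, if_pos (hsame.mp h)]; ring
    · rw [if_neg h, if_neg (fun hc => h (hsame.mpr hc))]; ring

end Aux3
section Aux4

open Relation
open scoped Classical

variable {V : Type*} [DecidableEq V] {Γ : SimpleGraph V} [Fintype V]

/-- vertices NOT reachable from `v`. -/
def Uset (v : V) (τ : Orient Γ) : Set V :=
  {u | ¬ Relation.ReflTransGen (dstep τ) v u}

lemma Uset_closed (v : V) (τ : Orient Γ) :
    ∀ e, τ.head e ∈ Uset v τ → τ.tail e ∈ Uset v τ := by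
  intro e hh ht
  exact hh (ht.tail ⟨e, rfl, rfl⟩)

lemma reach_flip (v : V) (τ : Orient Γ) {u : V}
    (h : Relation.ReflTransGen (dstep τ) v u) :
    Relation.ReflTransGen (dstep (flipO τ (Uset v τ))) v u := by
  induction h with
  | refl => exact .refl
  | tail h1 h2 ih =>
    refine ih.tail ?_
    obtain ⟨e, ht, hh⟩ := h2
    have hc : τ.tail e ∉ Uset v τ := fun hc => hc (ht ▸ h1)
    have hf : ¬(τ.head e ∉ Uset v τ ∧ τ.tail e ∈ Uset v τ) := fun h' => hc h'.2
    refine ⟨e, ?_, ?_⟩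
    · show (if τ.head e ∉ Uset v τ ∧ τ.tail e ∈ Uset v τ then τ.head e else τ.tail e) = _
      rw [if_neg hf]; exact ht
    · show (if τ.head e ∉ Uset v τ ∧ τ.tail e ∈ Uset v τ then τ.tail e else τ.head e) = _
      rw [if_neg hf]; exact hh

lemma crossing_adj (hconn : Γ.Connected) (U : Set V) (hne : U.Nonempty)
    (hne' : ∃ x, x ∉ U) : ∃ u x, u ∈ U ∧ x ∉ U ∧ Γ.Adj x u := by
  obtain ⟨u0, hu0⟩ := hne
  obtain ⟨x0, hx0⟩ := hne'
  obtain ⟨w⟩ := hconn.preconnected x0 u0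
  clear hconn
  induction w with
  | nil => exact absurd hu0 hx0
  | @cons a b c hadj p ih =>
    by_cases hb : b ∈ U
    · exact ⟨b, a, hb, hx0, hadj⟩
    · exact ih hu0 hb
  
lemma Uset_decrease (hconn : Γ.Connected) (v : V) (τ : Orient Γ)
    (hne : (Uset v τ).Nonempty) :
    Uset v (flipO τ (Uset v τ)) ⊂ Uset v τ := by
  constructor
  · intro u hu hcontra
    exact hu (reach_flip v τ hcontra)
  · intro hsub
    have hvU : v ∉ Uset v τ := fun h => h .refl
    obtain ⟨u, x, huU, hxU, hadj⟩ := crossing_adj hconn (Uset v τ) hne ⟨v, hvU⟩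
    set e : Γ.edgeSet := ⟨s(x, u), Γ.mem_edgeSet.mpr hadj⟩ with he
    -- determine head and tail of e under τ
    have hcons : s(τ.tail e, τ.head e) = s(x, u) := τ.consistent e
    have hht : τ.head e = x ∧ τ.tail e = u := by
      rcases Sym2.eq_iff.mp hcons with ⟨h1, h2⟩ | ⟨h1, h2⟩
      · -- tail = x, head = u : impossible since head ∈ U forces tail ∈ U
        exfalso
        have := Uset_closed v τ e (h2 ▸ huU)
        exact hxU (h1 ▸ this)
      · exact ⟨h2, h1⟩
    have hf : τ.head e ∉ Uset v τ ∧ τ.tail e ∈ Uset v τ :=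
      ⟨hht.1 ▸ hxU, hht.2 ▸ huU⟩
    have hstep : dstep (flipO τ (Uset v τ)) x u := by
      refine ⟨e, ?_, ?_⟩
      · show (if τ.head e ∉ Uset v τ ∧ τ.tail e ∈ Uset v τ then τ.head e else τ.tail e) = _
        rw [if_pos hf]; exact hht.1
      · show (if τ.head e ∉ Uset v τ ∧ τ.tail e ∈ Uset v τ then τ.tail e else τ.head e) = _
        rw [if_pos hf]; exact hht.2
    have hxreach : Relation.ReflTransGen (dstep (flipO τ (Uset v τ))) v x :=
      reach_flip v τ (not_not.mp hxU)
    have hureach := hxreach.tail hstep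
    have : u ∈ Uset v (flipO τ (Uset v τ)) := hsub huU
    exact this hureach

lemma range_mem_of_indicator (σ0 : Orient Γ) (U : Set V) (c : Γ.edgeSet → ℤ)
    (hc : ∀ e, c e = (if σ0.head e ∈ U then (1:ℤ) else 0) - (if σ0.tail e ∈ U then (1:ℤ) else 0)) :
    c ∈ LinearMap.range (Matrix.mulVecLin (incMat σ0)ᵀ) := by
  refine ⟨fun w => if w ∈ U then 1 else 0, ?_⟩
  funext e
  rw [Matrix.mulVecLin_apply, incMat_mulVec, hc e]

lemma fix_source (hconn : Γ.Connected) (σ0 : Orient Γ) (v : V) :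
    ∀ (n : ℕ) (τ : Orient Γ), OAcyclic τ → (Uset v τ).ncard ≤ n →
    ∃ σ, OAcyclic σ ∧ UniqueSource σ v ∧
      chi σ0 σ - chi σ0 τ ∈ LinearMap.range (Matrix.mulVecLin (incMat σ0)ᵀ) := by
  have base : ∀ τ : Orient Γ, OAcyclic τ → Uset v τ = ∅ →
      OAcyclic τ ∧ UniqueSource τ v := by
    intro τ hac hU
    have hreach : ∀ u, Relation.ReflTransGen (dstep τ) v u := by
      intro u
      by_contra h
      exact absurd (hU ▸ h : u ∈ (∅ : Set V)) (Set.notMem_empty u)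
    refine ⟨hac, ⟨?_, ?_⟩⟩
    · intro e he
      have := hreach (τ.tail e)
      exact hac v (Relation.TransGen.tail' this ⟨e, rfl, he⟩)
    · intro w hw
      rcases (hreach w).cases_tail with h | ⟨c, _, hc⟩
      · exact h
      · obtain ⟨e, _, hh⟩ := hc
        exact absurd hh (hw e)
  intro n
  induction n with
  | zero =>
    intro τ hac hcard
    have hU : Uset v τ = ∅ :=
      (Set.ncard_eq_zero (Set.toFinite _)).mp (Nat.le_zero.mp hcard)
    obtain ⟨h1, h2⟩ := base τ hac hU
    exact ⟨τ, h1, h2, by simpa using Submodule.zero_mem _⟩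
  | succ n ih =>
    intro τ hac hcard
    by_cases hne : (Uset v τ).Nonempty
    · have hcl := Uset_closed v τ
      have hac' : OAcyclic (flipO τ (Uset v τ)) := flip_acyclic hac hcl
      have hss := Uset_decrease hconn v τ hne
      have hcard' : (Uset v (flipO τ (Uset v τ))).ncard ≤ n := by
        have := Set.ncard_lt_ncard hss (Set.toFinite _)
        omega
      obtain ⟨σ, h1, h2, h3⟩ := ih (flipO τ (Uset v τ)) hac' hcard'
      refine ⟨σ, h1, h2, ?_⟩
      have hmem : chi σ0 (flipO τ (Uset v τ)) - chi σ0 τ ∈ LinearMap.range (Matrix.mulVecLin (incMat σ0)ᵀ) := by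
        apply range_mem_of_indicator σ0 (Uset v τ)
        intro e
        simp only [Pi.sub_apply]
        rw [flip_chi σ0 hcl e]
        ring
      have heq : chi σ0 σ - chi σ0 τ = (chi σ0 σ - chi σ0 (flipO τ (Uset v τ))) + (chi σ0 (flipO τ (Uset v τ)) - chi σ0 τ) := by
        funext e; simp only [Pi.sub_apply, Pi.add_apply]; ring
      rw [heq]
      exact Submodule.add_mem _ h3 hmem
    · have hU : Uset v τ = ∅ := Set.not_nonempty_iff_eq_empty.mp hne
      obtain ⟨h1, h2⟩ := base τ hac hU
      exact ⟨τ, h1, h2, by simpa using Submodule.zero_mem _⟩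

end Aux4
section Aux5

open Relation

variable {V : Type*} [DecidableEq V] {Γ : SimpleGraph V} [Fintype V]

noncomputable def fracOrient (σ0 : Orient Γ) (g : V → ℝ) : Orient Γ where
  head e := if g (σ0.tail e) < g (σ0.head e) then σ0.head e else σ0.tail e
  tail e := if g (σ0.tail e) < g (σ0.head e) then σ0.tail e else σ0.head e
  consistent e := by
    by_cases h : g (σ0.tail e) < g (σ0.head e)
    · rw [if_pos h, if_pos h]; exact σ0.consistent e
    · rw [if_neg h, if_neg h, Sym2.eq_swap]; exact σ0.consistent e

lemma fracOrient_acyclic (σ0 : Orient Γ) (hac0 : OAcyclic σ0) (g : V → ℝ) :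
    OAcyclic (fracOrient σ0 g) := by
  have hstep : ∀ u w, dstep (fracOrient σ0 g) u w →
      g u ≤ g w ∧ (g u = g w → dstep σ0 w u) := by
    intro u w hd
    obtain ⟨e, ht, hh⟩ := hd
    by_cases h : g (σ0.tail e) < g (σ0.head e)
    · have hu : σ0.tail e = u := by simpa [fracOrient, if_pos h] using ht
      have hw : σ0.head e = w := by simpa [fracOrient, if_pos h] using hh
      rw [← hu, ← hw]
      exact ⟨le_of_lt h, fun heq => absurd heq (ne_of_lt h)⟩
    · have hu : σ0.head e = u := by simpa [fracOrient, if_neg h] using ht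
      have hw : σ0.tail e = w := by simpa [fracOrient, if_neg h] using hh
      rw [← hu, ← hw]
      exact ⟨le_of_not_gt h, fun _ => ⟨e, rfl, rfl⟩⟩
  have htrans : ∀ u w, Relation.TransGen (dstep (fracOrient σ0 g)) u w →
      g u ≤ g w ∧ (g u = g w → Relation.TransGen (dstep σ0) w u) := by
    intro u w h
    induction h with
    | single h =>
      obtain ⟨h1, h2⟩ := hstep _ _ h
      exact ⟨h1, fun he => .single (h2 he)⟩
    | tail hab hbc ih =>
      obtain ⟨h1, h2⟩ := hstep _ _ hbc
      refine ⟨le_trans ih.1 h1, fun he => ?_⟩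
      have hub : g u = g _ := le_antisymm ih.1 (he ▸ h1)
      have hbc' : g _ = g _ := hub.symm.trans he
      exact Relation.TransGen.head (h2 hbc') (ih.2 hub)
  intro u hc
  exact hac0 u ((htrans u u hc).2 rfl)

lemma stepA (σ0 : Orient Γ) (hac0 : OAcyclic σ0) (a : Γ.edgeSet → ℤ) (y : V → ℝ)
    (hy : ∀ e, (a e : ℝ) - (y (σ0.head e) - y (σ0.tail e)) ∈ Set.Ico (0:ℝ) 1) :
    ∃ τ : Orient Γ, OAcyclic τ ∧
      chi σ0 τ - a ∈ LinearMap.range (Matrix.mulVecLin (incMat σ0)ᵀ) := by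
  refine ⟨fracOrient σ0 (fun w => Int.fract (y w)), fracOrient_acyclic σ0 hac0 _, ?_⟩
  refine ⟨fun w => -⌊y w⌋, ?_⟩
  funext e
  rw [Matrix.mulVecLin_apply, incMat_mulVec]
  simp only [Pi.sub_apply]
  obtain ⟨hb1, hb2⟩ := hy e
  have hchi : chi σ0 (fracOrient σ0 (fun w => Int.fract (y w))) e
      = if Int.fract (y (σ0.tail e)) < Int.fract (y (σ0.head e)) then 1 else 0 := by
    by_cases h : Int.fract (y (σ0.tail e)) < Int.fract (y (σ0.head e))
    · rw [if_pos h]; exact chi_eq_one (by simp [fracOrient, if_pos h])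
    · rw [if_neg h]; exact chi_eq_zero (by simp [fracOrient, if_neg h])
  rw [hchi]
  have fh1 : (0:ℝ) ≤ Int.fract (y (σ0.head e)) := Int.fract_nonneg _
  have fh2 : Int.fract (y (σ0.head e)) < 1 := Int.fract_lt_one _
  have ft1 : (0:ℝ) ≤ Int.fract (y (σ0.tail e)) := Int.fract_nonneg _
  have ft2 : Int.fract (y (σ0.tail e)) < 1 := Int.fract_lt_one _
  have hfl : ∀ w, ((⌊y w⌋ : ℤ) : ℝ) = y w - Int.fract (y w) :=
    fun w => (Int.self_sub_fract (y w)).symm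
  have hc : ((a e - ⌊y (σ0.head e)⌋ + ⌊y (σ0.tail e)⌋ : ℤ) : ℝ)
      = ((a e : ℝ) - (y (σ0.head e) - y (σ0.tail e)))
        + (Int.fract (y (σ0.head e)) - Int.fract (y (σ0.tail e))) := by
    push_cast
    rw [hfl, hfl]
    ring
  by_cases h : Int.fract (y (σ0.tail e)) < Int.fract (y (σ0.head e))
  · rw [if_pos h]
    have hlo : (0:ℝ) < ((a e - ⌊y (σ0.head e)⌋ + ⌊y (σ0.tail e)⌋ : ℤ) : ℝ) := by
      rw [hc]; linarith
    have hhi : ((a e - ⌊y (σ0.head e)⌋ + ⌊y (σ0.tail e)⌋ : ℤ) : ℝ) < 2 := by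
      rw [hc]; linarith
    have h1 : (0:ℤ) < a e - ⌊y (σ0.head e)⌋ + ⌊y (σ0.tail e)⌋ := by exact_mod_cast hlo
    have h2 : (a e - ⌊y (σ0.head e)⌋ + ⌊y (σ0.tail e)⌋ : ℤ) < 2 := by exact_mod_cast hhi
    omega
  · rw [if_neg h]
    have h' : Int.fract (y (σ0.head e)) ≤ Int.fract (y (σ0.tail e)) := le_of_not_gt h
    have hlo : (-1:ℝ) < ((a e - ⌊y (σ0.head e)⌋ + ⌊y (σ0.tail e)⌋ : ℤ) : ℝ) := by
      rw [hc]; linarith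
    have hhi : ((a e - ⌊y (σ0.head e)⌋ + ⌊y (σ0.tail e)⌋ : ℤ) : ℝ) < 1 := by
      rw [hc]; linarith
    have h1 : (-1:ℤ) < a e - ⌊y (σ0.head e)⌋ + ⌊y (σ0.tail e)⌋ := by exact_mod_cast hlo
    have h2 : (a e - ⌊y (σ0.head e)⌋ + ⌊y (σ0.tail e)⌋ : ℤ) < 1 := by exact_mod_cast hhi
    omega

end Aux5


/-- The bijection between acyclic orientations of `Γ` with unique source `v` and the
classes in `ℤ^E / A_{σ0}^T ℤ^V` of conic divisorial ideals (cosets meeting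
`[0,1)^E + A_{σ0}^T ℝ^V`). -/
theorem acyclic_orientations_biject_with_conic_classes
    {V : Type*} [Fintype V] [DecidableEq V] (Γ : SimpleGraph V)
    [Fintype Γ.edgeSet]
    (hconn : Γ.Connected)
    (σ0 : Orient Γ) (hacyc : OAcyclic σ0)
    (hhasse : ∀ e, ¬ ∃ w, dstep σ0 (σ0.tail e) w ∧
      Relation.TransGen (dstep σ0) w (σ0.head e))
    (v : V) :
    Set.BijOn
      (fun σ : Orient Γ =>
        (Submodule.Quotient.mk (fun e => if σ.head e = σ0.head e then (1 : ℤ) else 0) :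
          (Γ.edgeSet → ℤ) ⧸ LinearMap.range (Matrix.mulVecLin (incMat σ0)ᵀ)))
      {σ : Orient Γ | OAcyclic σ ∧ UniqueSource σ v}
      {α : (Γ.edgeSet → ℤ) ⧸ LinearMap.range (Matrix.mulVecLin (incMat σ0)ᵀ) |
        ∃ a : Γ.edgeSet → ℤ, Submodule.Quotient.mk a = α ∧
          ∃ y : V → ℝ, ∀ e, (a e : ℝ) - ∑ w, (incMat σ0 w e : ℝ) * y w ∈
            Set.Ico (0:ℝ) 1} := by
  refine ⟨?_, ?_, ?_⟩
  · -- MapsTo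
    rintro σ ⟨hac, hus⟩
    obtain ⟨y, hy⟩ := mapsTo_witness (σ0 := σ0) hac
    refine ⟨chi σ0 σ, rfl, y, ?_⟩
    intro e
    rw [incMat_sum_real]
    exact hy e
  · -- InjOn
    intro σ hσ σ' hσ' heq
    obtain ⟨z, hz⟩ := (Submodule.Quotient.eq _).mp heq
    refine inj_aux (σ0 := σ0) hσ.1 hσ'.1 hσ.2 hσ'.2 z ?_
    intro e
    have h2 := congrFun hz e
    rw [Matrix.mulVecLin_apply, incMat_mulVec] at h2
    exact h2
  · -- SurjOn
    intro α hα
    obtain ⟨a, hmk, y, hy⟩ := hα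
    have hy' : ∀ e, (a e : ℝ) - (y (σ0.head e) - y (σ0.tail e)) ∈ Set.Ico (0:ℝ) 1 := by
      intro e
      have := hy e
      rwa [incMat_sum_real] at this
    obtain ⟨τ, hacτ, hτ⟩ := stepA σ0 hacyc a y hy'
    obtain ⟨σ, h1, h2, h3⟩ := fix_source hconn σ0 v (Uset v τ).ncard τ hacτ le_rfl
    refine ⟨σ, ⟨h1, h2⟩, ?_⟩
    show Submodule.Quotient.mk (chi σ0 σ) = α
    rw [← hmk, Submodule.Quotient.eq]
    have heq : chi σ0 σ - a = (chi σ0 σ - chi σ0 τ) + (chi σ0 τ - a) := by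
      funext e; simp only [Pi.sub_apply, Pi.add_apply]; ring
    rw [heq]
    exact Submodule.add_mem _ h3 hτ
end

section
/- Let Γ be a finite simple graph, let σ0 be an acyclic orientation of Γ, and let σ be any acyclic orientation of Γ. Then for every cycle C of Γ and every choice of traversal direction, −#C^↓ < #(E(σ,σ0) ∩ C^↑) − #(E(σ,σ0) ∩ C^↓) < #C^↑. (Consequently, the class of the characteristic vector χ_{E(σ,σ0)} lies in the conic region W(B) associated with σ0.) -/
open Matrix

/-- For acyclic orientations `σ0`, `σ` of a finite simple graph and any cycle with any
traversal direction, the quantity `#(E(σ,σ0) ∩ C^↑) − #(E(σ,σ0) ∩ C^↓)` lies strictly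
between `−#C^↓` and `#C^↑`. -/
theorem agreement_set_strictly_inside_cycle_bounds
    {V : Type*} [DecidableEq V] (Γ : SimpleGraph V)
    (σ0 σ : Orient Γ) (h0 : OAcyclic σ0) (h1 : OAcyclic σ)
    (ℓ : ℕ) (i : ℕ → V) (c : ℕ → Γ.edgeSet) (hℓ : 3 ≤ ℓ)
    (hinj : ∀ s s', s < ℓ → s' < ℓ → i s = i s' → s = s')
    (hedge : ∀ s < ℓ, (c s : Sym2 V) = s(i s, i ((s + 1) % ℓ))) :
    -((((Finset.range ℓ).filter fun s => σ0.head (c s) = i s).card : ℤ) ) <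
      ((((Finset.range ℓ).filter fun s =>
          σ.head (c s) = σ0.head (c s) ∧ σ0.head (c s) = i ((s + 1) % ℓ)).card : ℤ)) -
        ((((Finset.range ℓ).filter fun s =>
          σ.head (c s) = σ0.head (c s) ∧ σ0.head (c s) = i s).card : ℤ)) ∧
    ((((Finset.range ℓ).filter fun s =>
        σ.head (c s) = σ0.head (c s) ∧ σ0.head (c s) = i ((s + 1) % ℓ)).card : ℤ)) -
      ((((Finset.range ℓ).filter fun s =>
        σ.head (c s) = σ0.head (c s) ∧ σ0.head (c s) = i s).card : ℤ)) <
      (((Finset.range ℓ).filter fun s => σ0.head (c s) = i ((s + 1) % ℓ)).card : ℤ) := by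
  classical
  have hℓ0 : 0 < ℓ := by omega
  have hne : ∀ s, s < ℓ → i s ≠ i ((s + 1) % ℓ) := by
    intro s hs h
    have hlt : (s + 1) % ℓ < ℓ := Nat.mod_lt _ hℓ0
    have := hinj s ((s + 1) % ℓ) hs hlt h
    rcases lt_or_eq_of_le (Nat.succ_le_of_lt hs) with h' | h'
    · rw [Nat.mod_eq_of_lt h'] at this; omega
    · have h'' : s + 1 = ℓ := h'
      rw [h'', Nat.mod_self] at this; omega
  have hd0 : ∀ s, s < ℓ → σ0.head (c s) = i s ∨ σ0.head (c s) = i ((s + 1) % ℓ) := by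
    intro s hs
    have h := σ0.consistent (c s)
    rw [hedge s hs, Sym2.eq_iff] at h
    tauto
  have hd1 : ∀ s, s < ℓ → σ.head (c s) = i s ∨ σ.head (c s) = i ((s + 1) % ℓ) := by
    intro s hs
    have h := σ.consistent (c s)
    rw [hedge s hs, Sym2.eq_iff] at h
    tauto
  have htail : ∀ s, s < ℓ → σ.head (c s) = i ((s + 1) % ℓ) → σ.tail (c s) = i s := by
    intro s hs hh
    have h := σ.consistent (c s)
    rw [hedge s hs, Sym2.eq_iff] at h
    rcases h with ⟨h, _⟩ | ⟨_, h⟩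
    · exact h
    · exact absurd (h.symm.trans hh) (hne s hs)
  have htail' : ∀ s, s < ℓ → σ.head (c s) = i s → σ.tail (c s) = i ((s + 1) % ℓ) := by
    intro s hs hh
    have h := σ.consistent (c s)
    rw [hedge s hs, Sym2.eq_iff] at h
    rcases h with ⟨_, h⟩ | ⟨h, _⟩
    · exact absurd (hh.symm.trans h) (hne s hs)
    · exact h
  -- existence of a backward edge for σ
  have key1 : ∃ s, s < ℓ ∧ σ.head (c s) = i s := by
    by_contra hcon
    push_neg at hcon
    have hfwd : ∀ s, s < ℓ → σ.head (c s) = i ((s + 1) % ℓ) := by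
      intro s hs
      rcases hd1 s hs with h | h
      · exact absurd h (hcon s hs)
      · exact h
    have hstep : ∀ s, s < ℓ → dstep σ (i s) (i ((s + 1) % ℓ)) := by
      intro s hs
      exact ⟨c s, htail s hs (hfwd s hs), hfwd s hs⟩
    have hchain : ∀ s, s < ℓ → Relation.TransGen (dstep σ) (i 0) (i ((s + 1) % ℓ)) := by
      intro s
      induction s with
      | zero => intro hs; exact Relation.TransGen.single (hstep 0 hs)
      | succ n ih =>
        intro hs
        have hn : n < ℓ := by omega
        have h1' : n + 1 < ℓ := hs
        have := ih hn
        rw [Nat.mod_eq_of_lt h1'] at this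
        exact this.tail (hstep (n + 1) hs)
    have := hchain (ℓ - 1) (by omega)
    have heq : (ℓ - 1 + 1) % ℓ = 0 := by
      have : ℓ - 1 + 1 = ℓ := by omega
      rw [this, Nat.mod_self]
    rw [heq] at this
    exact h1 (i 0) this
  -- existence of a forward edge for σ
  have key2 : ∃ s, s < ℓ ∧ σ.head (c s) = i ((s + 1) % ℓ) := by
    by_contra hcon
    push_neg at hcon
    have hbwd : ∀ s, s < ℓ → σ.head (c s) = i s := by
      intro s hs
      rcases hd1 s hs with h | h
      · exact h
      · exact absurd h (hcon s hs)
    have hstep : ∀ s, s < ℓ → dstep σ (i ((s + 1) % ℓ)) (i s) := by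
      intro s hs
      exact ⟨c s, htail' s hs (hbwd s hs), hbwd s hs⟩
    have hchain : ∀ s, s < ℓ → Relation.TransGen (dstep σ) (i ((s + 1) % ℓ)) (i 0) := by
      intro s
      induction s with
      | zero => intro hs; exact Relation.TransGen.single (hstep 0 hs)
      | succ n ih =>
        intro hs
        have hn : n < ℓ := by omega
        have h1' : n + 1 < ℓ := hs
        have prev := ih hn
        rw [Nat.mod_eq_of_lt h1'] at prev
        exact Relation.TransGen.head (hstep (n + 1) hs) prev
    have := hchain (ℓ - 1) (by omega)
    have heq : (ℓ - 1 + 1) % ℓ = 0 := by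
      have : ℓ - 1 + 1 = ℓ := by omega
      rw [this, Nat.mod_self]
    rw [heq] at this
    exact h1 (i 0) this
  -- pointwise identities
  have E1 : ∀ s ∈ Finset.range ℓ,
      ((if σ0.head (c s) = i s then (1 : ℕ) else 0) +
        if σ.head (c s) = σ0.head (c s) ∧ σ0.head (c s) = i ((s + 1) % ℓ) then 1 else 0) =
      ((if σ.head (c s) = σ0.head (c s) ∧ σ0.head (c s) = i s then (1 : ℕ) else 0) +
        if σ.head (c s) = i ((s + 1) % ℓ) then 1 else 0) := by
    intro s hs
    rw [Finset.mem_range] at hs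
    rcases hd0 s hs with h0' | h0' <;> rcases hd1 s hs with h1' | h1' <;>
      simp [h0', h1', hne s hs, (hne s hs).symm, Ne.symm (hne s hs)]
  have E2 : ∀ s ∈ Finset.range ℓ,
      ((if σ0.head (c s) = i ((s + 1) % ℓ) then (1 : ℕ) else 0) +
        if σ.head (c s) = σ0.head (c s) ∧ σ0.head (c s) = i s then 1 else 0) =
      ((if σ.head (c s) = σ0.head (c s) ∧ σ0.head (c s) = i ((s + 1) % ℓ) then (1 : ℕ) else 0) +
        if σ.head (c s) = i s then 1 else 0) := by
    intro s hs
    rw [Finset.mem_range] at hs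
    rcases hd0 s hs with h0' | h0' <;> rcases hd1 s hs with h1' | h1' <;>
      simp [h0', h1', hne s hs, (hne s hs).symm, Ne.symm (hne s hs)]
  have S1 := Finset.sum_congr rfl E1
  have S2 := Finset.sum_congr rfl E2
  simp only [Finset.sum_add_distrib, ← Finset.card_filter] at S1 S2
  have P1 : 0 < ((Finset.range ℓ).filter fun s => σ.head (c s) = i s).card := by
    obtain ⟨s, hs, h⟩ := key1
    exact Finset.card_pos.mpr ⟨s, Finset.mem_filter.mpr ⟨Finset.mem_range.mpr hs, h⟩⟩
  have P2 : 0 < ((Finset.range ℓ).filter fun s => σ.head (c s) = i ((s + 1) % ℓ)).card := by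
    obtain ⟨s, hs, h⟩ := key2
    exact Finset.card_pos.mpr ⟨s, Finset.mem_filter.mpr ⟨Finset.mem_range.mpr hs, h⟩⟩
  constructor <;> omega
end

section
/- Let Γ be a finite connected simple graph with vertex set V and edge set E, let σ0 be an orientation of Γ, and fix a vertex v ∈ V. If σ1 and σ2 are acyclic orientations of Γ, each having v as its unique source, and χ_{E(σ1,σ0)} − χ_{E(σ2,σ0)} ∈ A_{σ0}^T ℤ^V, then σ1 = σ2. -/
open Matrix

lemma Orient.hne {V : Type*} {Γ : SimpleGraph V} (σ : Orient Γ) (e : Γ.edgeSet) :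
    σ.head e ≠ σ.tail e := by
  have h := σ.consistent e
  have : Γ.Adj (σ.tail e) (σ.head e) := Γ.mem_edgeSet.mp (h ▸ e.2)
  exact this.ne'

lemma Orient.cases {V : Type*} {Γ : SimpleGraph V} (σ σ0 : Orient Γ) (e : Γ.edgeSet) :
    (σ.head e = σ0.head e ∧ σ.tail e = σ0.tail e) ∨
    (σ.head e = σ0.tail e ∧ σ.tail e = σ0.head e) := by
  have h : s(σ.tail e, σ.head e) = s(σ0.tail e, σ0.head e) := by
    rw [σ.consistent e, σ0.consistent e]
  rcases Sym2.eq_iff.mp h with ⟨ht, hh⟩ | ⟨ht, hh⟩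
  · exact Or.inl ⟨hh, ht⟩
  · exact Or.inr ⟨hh, ht⟩

lemma Orient.ext' {V : Type*} {Γ : SimpleGraph V} (σ τ : Orient Γ)
    (hh : σ.head = τ.head) (ht : σ.tail = τ.tail) : σ = τ := by
  cases σ; cases τ; simp_all

lemma mulVec_entry {V : Type*} [Fintype V] [DecidableEq V] {Γ : SimpleGraph V}
    (σ0 : Orient Γ) (y : V → ℤ) (e : Γ.edgeSet) :
    (incMat σ0)ᵀ.mulVec y e = y (σ0.head e) - y (σ0.tail e) := by
  have hne := σ0.hne e
  simp only [Matrix.mulVec, dotProduct, Matrix.transpose_apply, incMat, Matrix.of_apply]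
  rw [Finset.sum_congr rfl (g := fun w => (if w = σ0.head e then y w else 0) +
      (if w = σ0.tail e then -y w else 0))]
  · rw [Finset.sum_add_distrib, Finset.sum_ite_eq' Finset.univ, Finset.sum_ite_eq' Finset.univ]
    simp [sub_eq_add_neg]
  · intro w _
    by_cases h1 : w = σ0.head e <;> by_cases h2 : w = σ0.tail e <;> simp_all

lemma exists_min_step {V : Type*} [Fintype V] {Γ : SimpleGraph V} {σ : Orient Γ}
    (hac : OAcyclic σ) (S : Set V) (hS : S.Nonempty) :
    ∃ w ∈ S, ∀ u ∈ S, ¬ dstep σ u w := by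
  have hirr : IsIrrefl V (Relation.TransGen (dstep σ)) := ⟨hac⟩
  have htr : IsTrans V (Relation.TransGen (dstep σ)) :=
    ⟨fun _ _ _ => Relation.TransGen.trans⟩
  have hwf : WellFounded (Relation.TransGen (dstep σ)) :=
    Finite.wellFounded_of_trans_of_irrefl _
  obtain ⟨w, hw, hmin⟩ := hwf.has_min S hS
  exact ⟨w, hw, fun u hu hd => hmin u hu (Relation.TransGen.single hd)⟩

/-- If two acyclic orientations with the same unique source `v` have agreement
characteristic vectors (relative to `σ0`) that differ by an element of
`A_{σ0}^T ℤ^V`, then they coincide. -/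
theorem unique_source_acyclic_orientation_injectivity
    {V : Type*} [Fintype V] [DecidableEq V] (Γ : SimpleGraph V)
    (hconn : Γ.Connected)
    (σ0 σ1 σ2 : Orient Γ)
    (h1 : OAcyclic σ1) (h2 : OAcyclic σ2)
    (v : V) (hs1 : UniqueSource σ1 v) (hs2 : UniqueSource σ2 v)
    (hdiff : ∃ y : V → ℤ,
      (fun e => (if σ1.head e = σ0.head e then (1 : ℤ) else 0) -
        (if σ2.head e = σ0.head e then (1 : ℤ) else 0)) =
      (incMat σ0)ᵀ.mulVec y) :
    σ1 = σ2 := by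
  obtain ⟨y, hy⟩ := hdiff
  -- key per-edge dichotomy
  have key : ∀ e, (σ1.head e = σ2.head e ∧ σ1.tail e = σ2.tail e ∧
      y (σ1.head e) = y (σ1.tail e)) ∨
      (σ1.head e = σ2.tail e ∧ σ1.tail e = σ2.head e ∧
      y (σ1.head e) = y (σ1.tail e) + 1) := by
    intro e
    have heq := congrFun hy e
    rw [mulVec_entry] at heq
    have hne0 := σ0.hne e
    rcases σ1.cases σ0 e with ⟨a1, b1⟩ | ⟨a1, b1⟩ <;>
      rcases σ2.cases σ0 e with ⟨a2, b2⟩ | ⟨a2, b2⟩ <;>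
      simp only [a1, a2, eq_self_iff_true, if_true, if_neg (Ne.symm hne0), if_neg hne0] at heq
    · exact Or.inl ⟨a1.trans a2.symm, b1.trans b2.symm, by rw [a1, b1]; omega⟩
    · exact Or.inr ⟨a1.trans b2.symm, b1.trans a2.symm, by rw [a1, b1]; omega⟩
    · exact Or.inr ⟨a1.trans b2.symm, b1.trans a2.symm, by rw [a1, b1]; omega⟩
    · exact Or.inl ⟨a1.trans a2.symm, b1.trans b2.symm, by rw [a1, b1]; omega⟩
  -- maximum of y
  obtain ⟨wmax, _, hmax⟩ := Finset.exists_max_image (Finset.univ : Finset V) y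
    ⟨v, Finset.mem_univ v⟩
  obtain ⟨wmin, _, hminb⟩ := Finset.exists_min_image (Finset.univ : Finset V) y
    ⟨v, Finset.mem_univ v⟩
  have hmax' : ∀ u, y u ≤ y wmax := fun u => hmax u (Finset.mem_univ u)
  have hminb' : ∀ u, y wmin ≤ y u := fun u => hminb u (Finset.mem_univ u)
  -- v is in the max set
  have hvmax : y v = y wmax := by
    obtain ⟨w, hwS, hmin2⟩ := exists_min_step h2 {u | y u = y wmax} ⟨wmax, rfl⟩
    have hsrc : ∀ e, σ2.head e ≠ w := by
      intro e he
      rcases key e with ⟨hh, ht, hy1⟩ | ⟨hh, ht, hy1⟩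
      · refine hmin2 (σ2.tail e) ?_ ⟨e, rfl, he⟩
        show y (σ2.tail e) = y wmax
        rw [← ht, ← hy1, hh, he]; exact hwS
      · have hwS' : y w = y wmax := hwS
        have h3 : y (σ2.tail e) = y wmax + 1 := by rw [← hh, hy1, ht, he, hwS']
        have := hmax' (σ2.tail e)
        omega
    have := hs2.2 w hsrc
    rw [← this]; exact hwS
  -- v is in the min set
  have hvmin : y v = y wmin := by
    obtain ⟨w, hwT, hmin1⟩ := exists_min_step h1 {u | y u = y wmin} ⟨wmin, rfl⟩
    have hsrc : ∀ e, σ1.head e ≠ w := by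
      intro e he
      rcases key e with ⟨hh, ht, hy1⟩ | ⟨hh, ht, hy1⟩
      · refine hmin1 (σ1.tail e) ?_ ⟨e, rfl, he⟩
        show y (σ1.tail e) = y wmin
        rw [← hy1, he]; exact hwT
      · have := hminb' (σ1.tail e)
        rw [he, hwT] at hy1
        omega
    have := hs1.2 w hsrc
    rw [← this]; exact hwT
  have hconst : ∀ u, y u = y v := by
    intro u
    have := hmax' u; have := hminb' u
    omega
  have agree : ∀ e, σ1.head e = σ2.head e ∧ σ1.tail e = σ2.tail e := by
    intro e
    rcases key e with ⟨hh, ht, _⟩ | ⟨_, _, hy1⟩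
    · exact ⟨hh, ht⟩
    · rw [hconst (σ1.head e), hconst (σ1.tail e)] at hy1
      omega
  exact Orient.ext' σ1 σ2 (funext fun e => (agree e).1) (funext fun e => (agree e).2)
end
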